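/- arXiv:1404.0281 — 9 statements merged into one kernel-verified Lean document; each statement's English description precedes it below -/
import Mathlib

section
/- Let p be a prime, k a positive integer, and let a, b be integers with ord_p(a mod p^k) < k and ord_p(b mod p^k) < k. Then there exists a unit u of Z/p^kZ with b ≡ u^2 · a (mod p^k) if and only if ord_p(a mod p^k) = ord_p(b mod p^k) and sgn_p(a mod p^k) = sgn_p(b mod p^k). -/
/-!
Write `a ≡ p^α a₁` and `b ≡ p^β b₁ (mod p^k)` with `p ∤ a₁ b₁`. A unit factor cannot change a
`p`-adic order below `k`, so `α = β`, and then `b ≡ u² a (mod p^k)` amounts to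
`b₁ ≡ u² a₁ (mod p^(k-α))`. Solvability of this is decided modulo `p` for odd `p` (equal Legendre
symbols) and modulo `8` for `p = 2`: necessity by reduction, sufficiency by Hensel's lemma for
`a₁ X² - b₁` over `ℤ_[p]`, whose hypothesis `‖a₁ x² - b₁‖ < ‖2 a₁ x‖²` only asks for a solution
modulo `p`, resp. modulo `8` with `x = 1`. Modulo `2` and `4` the few cases are checked directly.
-/

/-- The representative of `a` modulo `m`, as a natural number. -/
def residue (m : ℕ) (a : ℤ) : ℕ := (a % (m : ℤ)).toNat

theorem natCast_residue {m : ℕ} (hm : m ≠ 0) (a : ℤ) :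
    ((residue m a : ℕ) : ZMod m) = a := by
  have h0 : 0 ≤ a % (m : ℤ) := Int.emod_nonneg a (by exact_mod_cast hm)
  rw [residue, ← Int.cast_natCast, Int.toNat_of_nonneg h0, ZMod.intCast_mod]

theorem residue_lt {m : ℕ} (hm : m ≠ 0) (a : ℤ) : residue m a < m := by
  have h := Int.emod_lt_of_pos a (by omega : (0 : ℤ) < m)
  rw [residue]
  omega

theorem Nat.pow_padicValNat_mul_div_eq_self (p n : ℕ) :
    p ^ padicValNat p n * (n / p ^ padicValNat p n) = n :=
  Nat.mul_div_cancel' pow_padicValNat_dvd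

theorem Nat.not_dvd_div_pow_padicValNat {p n : ℕ} [Fact p.Prime] (hn : n ≠ 0) :
    ¬ p ∣ n / p ^ padicValNat p n := fun h ↦ pow_succ_padicValNat_not_dvd hn <| by
  simpa only [pow_succ, Nat.pow_padicValNat_mul_div_eq_self] using
    mul_dvd_mul_left (p ^ padicValNat p n) h

theorem Nat.div_pow_lt_pow_sub {p n k α : ℕ} (hn : n < p ^ k) (hα : α ≤ k) :
    n / p ^ α < p ^ (k - α) :=
  Nat.div_lt_of_lt_mul (by rwa [← pow_add, Nat.add_sub_cancel' hα])

theorem ZMod.exists_unit_sq_mul_iff_exists_int (n : ℕ) (X Y : ℤ) :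
    (∃ u : (ZMod n)ˣ, (Y : ZMod n) = u ^ 2 * X) ↔
      ∃ U : ℤ, IsCoprime (n : ℤ) U ∧ (n : ℤ) ∣ U ^ 2 * X - Y := by
  simp_rw [← ZMod.coe_int_isUnit_iff_isCoprime, ← ZMod.intCast_eq_intCast_iff_dvd_sub,
    Int.cast_mul, Int.cast_pow]
  constructor
  · rintro ⟨u, hu⟩
    obtain ⟨U, hU⟩ := ZMod.intCast_surjective (u : ZMod n)
    exact ⟨U, hU ▸ u.isUnit, by rw [hU, hu]⟩
  · rintro ⟨U, hU, h⟩
    exact ⟨hU.unit, by rw [hU.unit_spec, h]⟩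

theorem ZMod.exists_sq_mul_eq_iff_exists_int (n : ℕ) (X Y : ℤ) :
    (∃ U : ZMod n, U ^ 2 * X = Y) ↔ ∃ U : ℤ, (n : ℤ) ∣ U ^ 2 * X - Y := by
  simp_rw [ZMod.intCast_surjective.exists, dvd_sub_comm, ← ZMod.intCast_eq_intCast_iff_dvd_sub,
    Int.cast_mul, Int.cast_pow]

theorem eq_of_pow_dvd_pow_mul_sub_pow_mul {R : Type*} [CommRing R] [IsDomain R] {p X Y : R}
    (hp : p ≠ 0) (hX : ¬ p ∣ X) (hY : ¬ p ∣ Y) {k α β : ℕ} (hα : α < k) (hβ : β < k)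
    (h : p ^ k ∣ p ^ α * X - p ^ β * Y) : α = β := by
  wlog hlt : α < β generalizing α β X Y
  · rcases (not_lt.mp hlt).lt_or_eq with hgt | heq
    · exact (this hY hX hβ hα (dvd_sub_comm.mp h) hgt).symm
    · exact heq.symm
  have hsucc : p ^ (α + 1) ∣ p ^ α * X := by
    have h₁ : p ^ (α + 1) ∣ p ^ β * Y := dvd_mul_of_dvd_left (pow_dvd_pow p hlt) Y
    exact (dvd_sub_left h₁).mp ((pow_dvd_pow p hα).trans h)
  exact absurd ((mul_dvd_mul_iff_left (pow_ne_zero α hp)).mp (pow_succ p α ▸ hsucc)) hX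

theorem pow_dvd_pow_mul_iff {R : Type*} [CommRing R] [IsDomain R] {p X : R} (hp : p ≠ 0)
    {k α : ℕ} (hα : α ≤ k) : p ^ k ∣ p ^ α * X ↔ p ^ (k - α) ∣ X := by
  rw [← Nat.add_sub_cancel' hα, pow_add, Nat.add_sub_cancel_left]
  exact mul_dvd_mul_iff_left (pow_ne_zero α hp)

theorem Int.exists_pow_dvd_sq_mul_sub_iff {p : ℕ} (hp : p.Prime) {k α β : ℕ} {X Y : ℤ}
    (hα : α < k) (hβ : β < k) (hX : ¬ (p : ℤ) ∣ X) (hY : ¬ (p : ℤ) ∣ Y) :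
    (∃ U : ℤ, IsCoprime ((p : ℤ) ^ k) U ∧ (p : ℤ) ^ k ∣ U ^ 2 * (p ^ α * X) - p ^ β * Y) ↔
      α = β ∧ ∃ U : ℤ, (p : ℤ) ^ (k - α) ∣ U ^ 2 * X - Y := by
  have hp' : Prime (p : ℤ) := Nat.prime_iff_prime_int.mp hp
  have hcancel (U : ℤ) :
      (p : ℤ) ^ k ∣ U ^ 2 * (p ^ α * X) - p ^ α * Y ↔ (p : ℤ) ^ (k - α) ∣ U ^ 2 * X - Y := by
    rw [← pow_dvd_pow_mul_iff hp'.ne_zero hα.le]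
    ring_nf
  constructor
  · rintro ⟨U, hU, h⟩
    have hU' : ¬ (p : ℤ) ∣ U :=
      hp'.coprime_iff_not_dvd.mp ((IsCoprime.pow_left_iff (by omega)).mp hU)
    have hUX : ¬ (p : ℤ) ∣ U ^ 2 * X := by
      rw [hp'.dvd_mul, not_or]
      exact ⟨fun hdvd ↦ hU' (hp'.dvd_of_dvd_pow hdvd), hX⟩
    obtain rfl :=
      eq_of_pow_dvd_pow_mul_sub_pow_mul hp'.ne_zero hUX hY hα hβ (by rwa [mul_left_comm])
    exact ⟨rfl, U, (hcancel U).mp h⟩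
  · rintro ⟨rfl, U, h⟩
    refine ⟨U, IsCoprime.pow_left (hp'.coprime_iff_not_dvd.mpr fun hU ↦ hY ?_), (hcancel U).mpr h⟩
    have hp_dvd : (p : ℤ) ∣ U ^ 2 * X - Y := (dvd_pow_self _ (by omega)).trans h
    exact (dvd_sub_right ((dvd_pow hU two_ne_zero).mul_right X)).mp hp_dvd

theorem exists_sq_mul_eq_iff_quadraticChar_eq {F : Type*} [Field F] [Fintype F] [DecidableEq F]
    {a b : F} (ha : a ≠ 0) (hb : b ≠ 0) :
    (∃ u, u ^ 2 * a = b) ↔ quadraticChar F a = quadraticChar F b := by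
  constructor
  · rintro ⟨u, rfl⟩
    have hu : u ≠ 0 := by rintro rfl; simp at hb
    rw [map_mul, quadraticChar_sq_one' hu, one_mul]
  · intro h
    have hχ : quadraticChar F (b / a) = 1 := by
      refine mul_right_cancel₀ ((quadraticChar_eq_zero_iff).not.mpr ha) ?_
      rw [← map_mul, div_mul_cancel₀ b ha, h, one_mul]
    obtain ⟨u, hu⟩ := (quadraticChar_one_iff_isSquare (div_ne_zero hb ha)).mp hχ
    exact ⟨u, by rw [sq, ← hu, div_mul_cancel₀ b ha]⟩

open Polynomial in
theorem PadicInt.exists_sq_mul_eq_of_norm_lt {p : ℕ} [Fact p.Prime] {x a b : ℤ_[p]}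
    (h : ‖x ^ 2 * a - b‖ < ‖2 * x * a‖ ^ 2) : ∃ z, z ^ 2 * a = b := by
  obtain ⟨z, hz, -⟩ := hensels_lemma (F := C a * X ^ 2 - C b) (a := x) (by
    simp only [map_sub, map_mul, aeval_C, aeval_X_pow, derivative_mul, derivative_C,
      derivative_X_pow, zero_mul, zero_add, Nat.cast_ofNat, sub_zero, Algebra.algebraMap_self,
      RingHom.id_apply]
    convert h using 3 <;> ring)
  simp only [map_sub, map_mul, aeval_C, aeval_X_pow, Algebra.algebraMap_self, RingHom.id_apply,
    sub_eq_zero] at hz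
  exact ⟨z, by rw [mul_comm, hz]⟩

theorem ZMod.exists_sq_mul_eq_iff_legendreSym_eq {p : ℕ} [Fact p.Prime] (hp2 : p ≠ 2) {m : ℕ}
    (hm : m ≠ 0) {X Y : ℤ} (hX : ¬ (p : ℤ) ∣ X) (hY : ¬ (p : ℤ) ∣ Y) :
    (∃ U : ZMod (p ^ m), U ^ 2 * X = Y) ↔ legendreSym p X = legendreSym p Y := by
  have hp : Prime (p : ℤ) := Nat.prime_iff_prime_int.mp Fact.out
  have hX' : (X : ZMod p) ≠ 0 := by rwa [Ne, ZMod.intCast_zmod_eq_zero_iff_dvd]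
  have hY' : (Y : ZMod p) ≠ 0 := by rwa [Ne, ZMod.intCast_zmod_eq_zero_iff_dvd]
  rw [legendreSym, legendreSym, ← exists_sq_mul_eq_iff_quadraticChar_eq hX' hY']
  constructor
  · rintro ⟨U, hU⟩
    refine ⟨ZMod.castHom (dvd_pow_self p hm) (ZMod p) U, ?_⟩
    simpa only [map_mul, map_pow, map_intCast] using
      congrArg (ZMod.castHom (dvd_pow_self p hm) (ZMod p)) hU
  · rintro ⟨u, hu⟩
    obtain ⟨x, rfl⟩ := ZMod.intCast_surjective u
    have hdvd : (p : ℤ) ∣ x ^ 2 * X - Y := by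
      rw [dvd_sub_comm, ← ZMod.intCast_eq_intCast_iff_dvd_sub]
      push_cast
      exact hu
    have hx : ¬ (p : ℤ) ∣ x := fun h ↦
      hY ((dvd_sub_right ((dvd_pow h two_ne_zero).mul_right X)).mp hdvd)
    have h2 : ¬ (p : ℤ) ∣ 2 := fun h ↦
      hp2 ((Nat.prime_dvd_prime_iff_eq Fact.out Nat.prime_two).mp (by exact_mod_cast h))
    obtain ⟨z, hz⟩ := PadicInt.exists_sq_mul_eq_of_norm_lt (x := (x : ℤ_[p])) (a := X) (b := Y) (by
      have h2xX : IsCoprime (2 * x * X) p := (hp.coprime_iff_not_dvd.mpr (by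
        simp only [hp.dvd_mul, not_or]; exact ⟨⟨h2, hx⟩, hX⟩)).symm
      have hlt : ‖((x ^ 2 * X - Y : ℤ) : ℤ_[p])‖ < 1 := PadicInt.norm_intCast_lt_one_iff.mpr hdvd
      rw [← PadicInt.norm_intCast_eq_one_iff] at h2xX
      push_cast at hlt h2xX
      rwa [h2xX, one_pow])
    exact ⟨PadicInt.toZModPow m z, by simpa using congrArg (PadicInt.toZModPow m) hz⟩

theorem ZMod.exists_sq_mul_eq_iff_mod_eight_eq {m : ℕ} (hm : m ≠ 0) {A B : ℕ} (hA : A % 2 = 1)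
    (hB : B % 2 = 1) (hAm : A < 2 ^ m) (hBm : B < 2 ^ m) :
    (∃ U : ZMod (2 ^ m), U ^ 2 * A = B) ↔ A % 8 = B % 8 := by
  rcases lt_or_ge m 3 with hm3 | hm3
  · interval_cases m <;> interval_cases A <;> interval_cases B <;> first | omega | decide
  have h8 : 8 ∣ 2 ^ m := pow_dvd_pow 2 hm3
  rw [← ZMod.natCast_eq_natCast_iff']
  constructor
  · rintro ⟨U, hU⟩
    have h := congrArg (ZMod.castHom h8 (ZMod 8)) hU
    simp only [map_mul, map_pow, map_natCast] at h
    have hodd : (ZMod.castHom h8 (ZMod 8) U ^ 2 * A).val % 2 = 1 := by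
      rw [h, ZMod.val_natCast]; omega
    have sq_mul_of_odd : ∀ u a : ZMod 8, (u ^ 2 * a).val % 2 = 1 → u ^ 2 * a = a := by decide
    rw [← h, sq_mul_of_odd _ _ hodd]
  · intro h
    have hdvd : ((2 : ℕ) : ℤ) ^ 3 ∣ (A - B : ℤ) :=
      (ZMod.intCast_eq_intCast_iff_dvd_sub (B : ℤ) A 8).mp (by exact_mod_cast h.symm)
    have hle : ‖((A - B : ℤ) : ℤ_[2])‖ ≤ 2 ^ (-3 : ℤ) :=
      PadicInt.norm_int_le_pow_iff_dvd.mpr hdvd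
    have hA1 : ‖(A : ℤ_[2])‖ = 1 :=
      PadicInt.norm_natCast_eq_one_iff.mpr (Nat.coprime_two_left.mpr (Nat.odd_iff.mpr hA))
    obtain ⟨z, hz⟩ := PadicInt.exists_sq_mul_eq_of_norm_lt (x := 1) (a := (A : ℤ_[2])) (b := B) (by
      push_cast at hle
      have h2 : ‖(2 : ℤ_[2])‖ = 2⁻¹ := by exact_mod_cast PadicInt.norm_p (p := 2)
      rw [one_pow, one_mul, mul_one, norm_mul, hA1, mul_one, h2]
      exact hle.trans_lt (by norm_num))
    exact ⟨PadicInt.toZModPow m z, by simpa using congrArg (PadicInt.toZModPow m) hz⟩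

theorem unit_square_equiv_iff_symbol_eq_general (p k : ℕ) [Fact p.Prime]
    (a b : ℤ)
    (ha0 : residue (p ^ k) a ≠ 0) (hb0 : residue (p ^ k) b ≠ 0)
    (ha : padicValNat p (residue (p ^ k) a) < k)
    (hb : padicValNat p (residue (p ^ k) b) < k) :
    (∃ u : (ZMod (p ^ k))ˣ,
        (b : ZMod (p ^ k)) = (u : ZMod (p ^ k)) ^ 2 * (a : ZMod (p ^ k))) ↔
      padicValNat p (residue (p ^ k) a) = padicValNat p (residue (p ^ k) b) ∧
        (if p = 2 then
          (residue (p ^ k) a) / p ^ padicValNat p (residue (p ^ k) a) % 8 =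
            (residue (p ^ k) b) / p ^ padicValNat p (residue (p ^ k) b) % 8
        else
          legendreSym p ((residue (p ^ k) a) / p ^ padicValNat p (residue (p ^ k) a)) =
            legendreSym p ((residue (p ^ k) b) / p ^ padicValNat p (residue (p ^ k) b))) := by
  have hp : p.Prime := Fact.out
  have hpk : p ^ k ≠ 0 := pow_ne_zero k hp.ne_zero
  rw [← natCast_residue hpk a, ← natCast_residue hpk b, ← Int.cast_natCast (residue _ a),
    ← Int.cast_natCast (residue _ b), ZMod.exists_unit_sq_mul_iff_exists_int, Nat.cast_pow]
  set A := residue (p ^ k) a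
  set B := residue (p ^ k) b
  set α := padicValNat p A
  set β := padicValNat p B
  have hA : (A : ℤ) = p ^ α * (A / p ^ α : ℕ) :=
    mod_cast (Nat.pow_padicValNat_mul_div_eq_self p A).symm
  have hB : (B : ℤ) = p ^ β * (B / p ^ β : ℕ) :=
    mod_cast (Nat.pow_padicValNat_mul_div_eq_self p B).symm
  have hA₁ : ¬ (p : ℤ) ∣ (A / p ^ α : ℕ) := mod_cast Nat.not_dvd_div_pow_padicValNat ha0
  have hB₁ : ¬ (p : ℤ) ∣ (B / p ^ β : ℕ) := mod_cast Nat.not_dvd_div_pow_padicValNat hb0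
  rw [hA, hB, Int.exists_pow_dvd_sq_mul_sub_iff hp ha hb hA₁ hB₁, ← Nat.cast_pow,
    ← ZMod.exists_sq_mul_eq_iff_exists_int]
  refine and_congr_right fun hαβ ↦ ?_
  have hA₁lt : A / p ^ α < p ^ (k - α) := Nat.div_pow_lt_pow_sub (residue_lt hpk a) ha.le
  have hB₁lt : B / p ^ β < p ^ (k - α) := by
    rw [hαβ]; exact Nat.div_pow_lt_pow_sub (residue_lt hpk b) hb.le
  split_ifs with hp2
  · subst hp2
    simp only [Int.cast_natCast]
    exact ZMod.exists_sq_mul_eq_iff_mod_eight_eq (by omega) (by omega) (by omega) hA₁lt hB₁lt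
  · have hpα (γ : ℕ) : (p : ℤ) ^ γ ≠ 0 := pow_ne_zero γ (by exact_mod_cast hp.ne_zero)
    rw [mul_div_cancel_left₀ _ (hpα α), mul_div_cancel_left₀ _ (hpα β)]
    exact ZMod.exists_sq_mul_eq_iff_legendreSym_eq hp2 (by omega) hA₁ hB₁

/-- b ≡ u² a (mod p^k) for some unit u iff the p^k-symbols
(order, sign) of a and b agree, assuming both orders are < k. -/
theorem unit_square_equiv_iff_symbol_eq (p k : ℕ) [Fact p.Prime] (hk : 0 < k)
    (a b : ℤ)
    (ha0 : residue (p ^ k) a ≠ 0) (hb0 : residue (p ^ k) b ≠ 0)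
    (ha : padicValNat p (residue (p ^ k) a) < k)
    (hb : padicValNat p (residue (p ^ k) b) < k) :
    (∃ u : (ZMod (p ^ k))ˣ,
        (b : ZMod (p ^ k)) = (u : ZMod (p ^ k)) ^ 2 * (a : ZMod (p ^ k))) ↔
      padicValNat p (residue (p ^ k) a) = padicValNat p (residue (p ^ k) b) ∧
        (if p = 2 then
          (residue (p ^ k) a) / p ^ padicValNat p (residue (p ^ k) a) % 8 =
            (residue (p ^ k) b) / p ^ padicValNat p (residue (p ^ k) b) % 8
        else
          legendreSym p ((residue (p ^ k) a) / p ^ padicValNat p (residue (p ^ k) a)) =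
            legendreSym p ((residue (p ^ k) b) / p ^ padicValNat p (residue (p ^ k) b))) :=
  unit_square_equiv_iff_symbol_eq_general p k a b ha0 hb0 ha hb
end

section
/- Let p be an odd prime, k ≥ 1, and let Q, t be integers with ord_p(t) < k. Then the congruence Q·x² ≡ t (mod p^k) has a solution x in Z/p^kZ if and only if ord_p(t) − ord_p(Q) is nonnegative and even, and the Legendre symbol of cop_p(Q)·cop_p(t) modulo p equals 1. -/
/-!
Write `Q = p^a Q'` and `t = p^b T` with `p ∤ Q' T`. A solution `y = p^c y'` forces
`a + 2c = b`, since `t ≢ 0 (mod p^k)` pins the valuation of `Q y²`; cancelling `p^b` leaves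
`Q' y'² ≡ T (mod p^(k-b))`, a congruence between units. Such a congruence is solvable iff it is
solvable mod `p`, i.e. iff `Q' T` is a square mod `p`: for odd `p` a solution mod `p` lifts to
every `p^n` by Hensel's lemma, the derivative `2 Q' y'` being a unit.
-/

variable {p : ℕ}

def padicCoprimePart (p : ℕ) (z : ℤ) : ℤ := z / (p : ℤ) ^ padicValInt p z

lemma pow_padicValInt_mul_padicCoprimePart (z : ℤ) :
    (p : ℤ) ^ padicValInt p z * padicCoprimePart p z = z :=
  Int.mul_ediv_cancel' (padicValInt_dvd z)

variable [Fact p.Prime]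

lemma not_dvd_padicCoprimePart {z : ℤ} (hz : z ≠ 0) : ¬ (p : ℤ) ∣ padicCoprimePart p z := by
  rintro ⟨c, hc⟩
  have hdvd : (p : ℤ) ^ (padicValInt p z + 1) ∣ z :=
    ⟨c, by
      conv_lhs => rw [← pow_padicValInt_mul_padicCoprimePart (p := p) z, hc]
      ring⟩
  rcases (padicValInt_dvd_iff _ z).1 hdvd with h | h <;> omega

lemma padicValInt_eq_of_pow_dvd_sub {x z : ℤ} {k : ℕ} (h : (p : ℤ) ^ k ∣ x - z) (hz : z ≠ 0)
    (hzk : padicValInt p z < k) : padicValInt p x = padicValInt p z := by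
  have hdvd_iff : ∀ n ≤ k, (p : ℤ) ^ n ∣ x ↔ (p : ℤ) ^ n ∣ z := fun n hn => by
    simpa using dvd_add_right ((pow_dvd_pow _ hn).trans h) (c := z)
  have hx : x ≠ 0 := by
    rintro rfl
    rcases (padicValInt_dvd_iff k z).1 ((hdvd_iff k le_rfl).1 (dvd_zero _)) with h | h <;> omega
  have hge := (padicValInt_dvd_iff _ x).1 ((hdvd_iff _ hzk.le).2 (padicValInt_dvd z))
  have hlt : ¬ (p : ℤ) ^ (padicValInt p z + 1) ∣ z := fun h => by
    rcases (padicValInt_dvd_iff _ z).1 h with h | h <;> omega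
  rw [← hdvd_iff _ hzk, padicValInt_dvd_iff] at hlt
  omega

lemma exists_zmod_mul_sq_eq_iff (n : ℕ) (a b : ℤ) :
    (∃ x : ZMod n, (a : ZMod n) * x ^ 2 = b) ↔ ∃ y : ℤ, (n : ℤ) ∣ a * y ^ 2 - b := by
  simp_rw [ZMod.intCast_surjective.exists, ← ZMod.intCast_zmod_eq_zero_iff_dvd, Int.cast_sub,
    Int.cast_mul, Int.cast_pow, sub_eq_zero]

lemma exists_mul_sq_eq_iff_isSquare_mul {K : Type*} [Field K] {u : K} (hu : u ≠ 0) (v : K) :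
    (∃ x : K, u * x ^ 2 = v) ↔ IsSquare (u * v) := by
  constructor
  · rintro ⟨x, rfl⟩
    exact ⟨u * x, by ring⟩
  · rintro ⟨s, hs⟩
    exact ⟨s / u, by field_simp; linear_combination -hs⟩

lemma exists_mul_sq_sub_dvd_pow_succ (hp2 : p ≠ 2) {u v w : ℤ} (hu : ¬ (p : ℤ) ∣ u)
    (hv : ¬ (p : ℤ) ∣ v) (hw : (p : ℤ) ∣ u * w ^ 2 - v) (n : ℕ) :
    ∃ w' : ℤ, (p : ℤ) ^ (n + 1) ∣ u * w' ^ 2 - v := by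
  induction n with
  | zero => exact ⟨w, by simpa using hw⟩
  | succ n ih =>
    obtain ⟨w, d, hd⟩ := ih
    have hpp : Prime (p : ℤ) := Nat.prime_iff_prime_int.1 Fact.out
    have h2 : ¬ (p : ℤ) ∣ 2 := fun h =>
      hp2 ((Nat.prime_dvd_prime_iff_eq Fact.out Nat.prime_two).1 (by exact_mod_cast h))
    have hpw : ¬ (p : ℤ) ∣ w := fun h => hv <| by
      have hpd : (p : ℤ) ∣ u * w ^ 2 - v := (dvd_pow_self _ n.succ_ne_zero).trans ⟨d, hd⟩
      exact (dvd_sub_right (dvd_mul_of_dvd_right (dvd_pow h two_ne_zero) u)).1 hpd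
    obtain ⟨a, b, hab⟩ := (hpp.coprime_iff_not_dvd (n := 2 * u * w)).2 <| by
      simp only [hpp.dvd_mul, h2, hu, hpw, or_self, not_false_eq_true]
    -- Newton step: `b` inverts the derivative `2 u w` modulo `p`.
    refine ⟨w - d * b * (p : ℤ) ^ (n + 1), d * a + u * d ^ 2 * b ^ 2 * (p : ℤ) ^ n, ?_⟩
    linear_combination hd - (p : ℤ) ^ (n + 1) * d * hab

lemma exists_mul_sq_sub_dvd_pow_iff_legendreSym (hp2 : p ≠ 2) {u v : ℤ}
    (hu : ¬ (p : ℤ) ∣ u) (hv : ¬ (p : ℤ) ∣ v) {n : ℕ} (hn : n ≠ 0) :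
    (∃ w : ℤ, (p : ℤ) ^ n ∣ u * w ^ 2 - v) ↔ legendreSym p (u * v) = 1 := by
  have hu' : (u : ZMod p) ≠ 0 := (ZMod.intCast_zmod_eq_zero_iff_dvd u p).not.2 hu
  have hv' : (v : ZMod p) ≠ 0 := (ZMod.intCast_zmod_eq_zero_iff_dvd v p).not.2 hv
  rw [legendreSym.eq_one_iff p (by push_cast; exact mul_ne_zero hu' hv'), Int.cast_mul,
    ← exists_mul_sq_eq_iff_isSquare_mul hu', exists_zmod_mul_sq_eq_iff]
  obtain ⟨m, rfl⟩ := Nat.exists_eq_succ_of_ne_zero hn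
  exact ⟨fun ⟨w, hw⟩ => ⟨w, (dvd_pow_self _ hn).trans hw⟩,
    fun ⟨_, hw⟩ => exists_mul_sq_sub_dvd_pow_succ hp2 hu hv hw m⟩

lemma pow_dvd_mul_sq_sub_iff {Q t : ℤ} {c k : ℕ}
    (hc : padicValInt p Q + 2 * c = padicValInt p t) (htk : padicValInt p t ≤ k) (w : ℤ) :
    (p : ℤ) ^ k ∣ Q * ((p : ℤ) ^ c * w) ^ 2 - t ↔
      (p : ℤ) ^ (k - padicValInt p t) ∣ padicCoprimePart p Q * w ^ 2 - padicCoprimePart p t := by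
  have hfactor : Q * ((p : ℤ) ^ c * w) ^ 2 - t = (p : ℤ) ^ padicValInt p t *
      (padicCoprimePart p Q * w ^ 2 - padicCoprimePart p t) := by
    conv_lhs => rw [← pow_padicValInt_mul_padicCoprimePart (p := p) Q,
      ← pow_padicValInt_mul_padicCoprimePart (p := p) t]
    rw [← hc]
    ring
  obtain ⟨m, rfl⟩ := Nat.exists_eq_add_of_le htk
  rw [hfactor, Nat.add_sub_cancel_left, pow_add,
    mul_dvd_mul_iff_left (pow_ne_zero _ (by exact_mod_cast (Fact.out : p.Prime).ne_zero))]

theorem exists_mul_sq_sub_dvd_pow_iff (hp2 : p ≠ 2) {Q t : ℤ} (hQ : Q ≠ 0) (ht : t ≠ 0) {k : ℕ}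
    (htk : padicValInt p t < k) :
    (∃ y : ℤ, (p : ℤ) ^ k ∣ Q * y ^ 2 - t) ↔
      padicValInt p Q ≤ padicValInt p t ∧ Even (padicValInt p t - padicValInt p Q) ∧
        legendreSym p (padicCoprimePart p Q * padicCoprimePart p t) = 1 := by
  have hunit := exists_mul_sq_sub_dvd_pow_iff_legendreSym hp2 (not_dvd_padicCoprimePart hQ)
    (not_dvd_padicCoprimePart ht) (n := k - padicValInt p t) (by omega)
  constructor
  · rintro ⟨y, hy⟩
    have hy0 : y ≠ 0 := by
      rintro rfl
      rcases (padicValInt_dvd_iff k t).1 (by simpa using hy) with h | h <;> omega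
    have hval : padicValInt p Q + 2 * padicValInt p y = padicValInt p t := by
      rw [← padicValInt_eq_of_pow_dvd_sub hy ht htk, padicValInt.mul hQ (pow_ne_zero 2 hy0), sq,
        padicValInt.mul hy0 hy0]
      ring
    rw [← pow_padicValInt_mul_padicCoprimePart (p := p) y, pow_dvd_mul_sq_sub_iff hval htk.le] at hy
    exact ⟨by omega, ⟨padicValInt p y, by omega⟩, hunit.1 ⟨_, hy⟩⟩
  · rintro ⟨hle, ⟨c, hc⟩, hleg⟩
    obtain ⟨w, hw⟩ := hunit.2 hleg
    exact ⟨(p : ℤ) ^ c * w, (pow_dvd_mul_sq_sub_iff (by omega) htk.le w).2 hw⟩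

theorem one_dim_representable_iff_odd_prime_general (p k : ℕ) [Fact p.Prime] (hodd : Odd p)
    (Q : ℤ) (hQ : Q ≠ 0) (t : ℕ) (ht : 0 < t)
    (hvt : padicValNat p t < k) :
    (∃ x : ZMod (p ^ k), (Q : ZMod (p ^ k)) * x ^ 2 = (t : ZMod (p ^ k))) ↔
      padicValInt p Q ≤ padicValNat p t ∧
        Even (padicValNat p t - padicValInt p Q) ∧
        legendreSym p ((Q / (p : ℤ) ^ padicValInt p Q) *
          ((t / p ^ padicValNat p t : ℕ) : ℤ)) = 1 := by
  have hp2 : p ≠ 2 := by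
    rintro rfl
    exact Nat.not_odd_iff_even.2 even_two hodd
  have hcop : ((t / p ^ padicValNat p t : ℕ) : ℤ) = padicCoprimePart p t := by
    rw [padicCoprimePart, padicValInt.of_nat, Int.natCast_div]
    push_cast
    rfl
  rw [← Int.cast_natCast (R := ZMod (p ^ k)) t, exists_zmod_mul_sq_eq_iff, hcop,
    ← padicValInt.of_nat (p := p)]
  push_cast
  exact exists_mul_sq_sub_dvd_pow_iff hp2 hQ (by exact_mod_cast ht.ne')
    (by rwa [padicValInt.of_nat])

/-- for odd p, Q·x² ≡ t (mod p^k) is solvable iff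
ord_p(t) − ord_p(Q) is nonnegative and even and (cop_p(Q)cop_p(t)/p) = 1. -/
theorem one_dim_representable_iff_odd_prime (p k : ℕ) [Fact p.Prime] (hodd : Odd p)
    (hk : 0 < k) (Q : ℤ) (hQ : Q ≠ 0) (t : ℕ) (ht : 0 < t) (htk : t < p ^ k)
    (hvt : padicValNat p t < k) :
    (∃ x : ZMod (p ^ k), (Q : ZMod (p ^ k)) * x ^ 2 = (t : ZMod (p ^ k))) ↔
      padicValInt p Q ≤ padicValNat p t ∧
        Even (padicValNat p t - padicValInt p Q) ∧
        legendreSym p ((Q / (p : ℤ) ^ padicValInt p Q) *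
          ((t / p ^ padicValNat p t : ℕ) : ℤ)) = 1 :=
  one_dim_representable_iff_odd_prime_general p k hodd Q hQ t ht hvt
end

section
/- Let p be an odd prime, k ≥ 1, and let Q, t be integers with ord_p(t) < k, ord_p(Q) ≤ ord_p(t), ord_p(t) − ord_p(Q) even, and (cop_p(Q)·cop_p(t) / p) = 1. Then the number of solutions x ∈ Z/p^kZ of Q·x² ≡ t (mod p^k) is exactly 2·p^{(ord_p(t)+ord_p(Q))/2}. -/
/-!
Write `Q = p^a A` and `t = p^(a+2m) B` with `p ∤ A B`. Every solution of `Q x² ≡ t (mod p^k)` is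
divisible by `p^m`, and `x = p^m y` is a solution iff `A y² ≡ B (mod p^(k-a-2m))`, a condition on
`y mod p^(k-a-2m)` alone; so the solutions correspond to the lifts to `ℤ/p^(k-m)` of the
solutions modulo `p^(k-a-2m)`, and each of these has `p^(a+m)` lifts. Modulo a power of `p`,
`A y² ≡ B` has exactly two solutions: Hensel's lemma lifts a square root of `A B` from `ℤ/p`,
and in the local ring `ℤ/p^n`, where `2` is invertible, a unit square `d²` has no square roots
besides `±d`.
-/

open Function

section LocalRing

variable {R : Type*} [CommRing R] [IsLocalRing R]

theorem IsLocalRing.sq_eq_sq_iff_of_isUnit (h2 : IsUnit (2 : R)) {d : R} (hd : IsUnit d)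
    (z : R) : z ^ 2 = d ^ 2 ↔ z = d ∨ z = -d := by
  refine ⟨fun hz => ?_, by rintro (rfl | rfl) <;> ring⟩
  have hprod : (z - d) * (z + d) = 0 := by linear_combination hz
  have hz : IsUnit z := (isUnit_pow_iff two_ne_zero).mp (hz ▸ hd.pow 2)
  rcases IsLocalRing.isUnit_or_isUnit_of_isUnit_add
      (show IsUnit ((z - d) + (z + d)) by convert h2.mul hz using 1; ring) with h | h
  · right; linear_combination h.mul_right_eq_zero.mp hprod
  · left; linear_combination h.mul_left_eq_zero.mp hprod

theorem IsLocalRing.card_sq_eq_sq (h2 : IsUnit (2 : R)) {d : R} (hd : IsUnit d) :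
    Nat.card {z : R // z ^ 2 = d ^ 2} = 2 := by
  have hne : d ≠ -d := fun h => (h2.mul hd).ne_zero (by linear_combination h)
  rw [Nat.card_congr (Equiv.subtypeEquivRight (sq_eq_sq_iff_of_isUnit h2 hd)),
    ← Set.ncard_pair hne, ← Nat.card_coe_set_eq]
  rfl

end LocalRing

theorem ZMod.isLocalRing_prime_pow (p : ℕ) [Fact p.Prime] {n : ℕ} (hn : n ≠ 0) :
    IsLocalRing (ZMod (p ^ n)) :=
  have : Fact (1 < p ^ n) := ⟨Nat.one_lt_pow hn (Fact.out : p.Prime).one_lt⟩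
  .of_surjective (PadicInt.toZModPow n) (ZMod.ringHom_surjective _)

theorem ZMod.isUnit_intCast_prime_pow_iff {p : ℕ} [Fact p.Prime] {n : ℕ} (hn : n ≠ 0) (c : ℤ) :
    IsUnit (c : ZMod (p ^ n)) ↔ ¬ (p : ℤ) ∣ c := by
  have := ZMod.isLocalRing_prime_pow p hn
  let f := ZMod.castHom (dvd_pow_self p hn) (ZMod p)
  rw [← ZMod.intCast_zmod_eq_zero_iff_dvd, ← ne_eq, ← isUnit_iff_ne_zero, ← map_intCast f]
  exact (isUnit_map_iff f _).symm

open Polynomial in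
theorem PadicInt.exists_sq_eq_intCast {p : ℕ} [Fact p.Prime] (hp : p ≠ 2) {c : ℤ}
    (hc : ¬ (p : ℤ) ∣ c) (hsq : IsSquare (c : ZMod p)) : ∃ z : ℤ_[p], z ^ 2 = c := by
  obtain ⟨r, hr⟩ := hsq
  set R : ℤ := (r.val : ℤ)
  have hRc : (p : ℤ) ∣ R ^ 2 - c := by
    rw [← ZMod.intCast_zmod_eq_zero_iff_dvd]
    push_cast [R, ZMod.natCast_val, ZMod.cast_id', hr]
    ring
  have h2R : ¬ (p : ℤ) ∣ 2 * R := by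
    intro h
    rcases Int.Prime.dvd_mul' (Fact.out : p.Prime) h with h | h
    · exact hp ((Nat.prime_dvd_prime_iff_eq Fact.out Nat.prime_two).mp (by exact_mod_cast h))
    · exact hc (by simpa using (dvd_pow h two_ne_zero).sub hRc)
  obtain ⟨z, hz, -⟩ := hensels_lemma (F := X ^ 2 - C c) (a := (R : ℤ_[p])) (by
    have h1 : ‖((2 * R : ℤ) : ℤ_[p])‖ = 1 :=
      le_antisymm (PadicInt.norm_le_one _)
        (not_lt.mp ((PadicInt.norm_int_lt_one_iff_dvd _).not.mpr h2R))
    have h2 : ‖((R ^ 2 - c : ℤ) : ℤ_[p])‖ < 1 := (PadicInt.norm_int_lt_one_iff_dvd _).mpr hRc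
    push_cast at h1 h2
    simpa [← norm_mul, map_ofNat, h1] using h2)
  exact ⟨z, by simpa [sub_eq_zero] using hz⟩

theorem AddMonoidHom.card_preimage_of_surjective {G H : Type*} [AddGroup G] [AddGroup H]
    (f : G →+ H) (hf : Surjective f) (s : Set H) :
    Nat.card (f ⁻¹' s) = Nat.card f.ker * Nat.card s := by
  let e := QuotientAddGroup.quotientKerEquivOfSurjective f hf
  have hpre : f ⁻¹' s = QuotientAddGroup.mk ⁻¹' (e ⁻¹' s) := rfl
  rw [hpre, Nat.card_congr (QuotientAddGroup.preimageMkEquivAddSubgroupProdSet _ _),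
    Nat.card_prod, Nat.card_preimage_of_injective e.injective (by simp [e.surjective.range_eq])]

namespace ZMod

theorem card_ker_castHom_pow {p : ℕ} (hp : p ≠ 0) {i j : ℕ} (hij : i ≤ j) :
    Nat.card (castHom (pow_dvd_pow p hij) (ZMod (p ^ i))).toAddMonoidHom.ker = p ^ (j - i) := by
  let f := (castHom (pow_dvd_pow p hij) (ZMod (p ^ i))).toAddMonoidHom
  have h := f.card_preimage_of_surjective (castHom_surjective (pow_dvd_pow p hij)) .univ
  rw [Set.preimage_univ, Nat.card_univ, Nat.card_univ, Nat.card_zmod, Nat.card_zmod] at h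
  refine Nat.eq_of_mul_eq_mul_right (pow_pos (Nat.pos_of_ne_zero hp) i) (h.symm.trans ?_)
  rw [← pow_add, Nat.sub_add_cancel hij]

def mulLeftHom {N M : ℕ} (d : ℕ) (h : d * N = M) : ZMod N →+ ZMod M :=
  lift N ⟨(Int.castAddHom (ZMod M)).comp (AddMonoidHom.mulLeft (d : ℤ)), by
    subst h
    show (((d * N : ℕ) : ℤ) : ZMod (d * N)) = 0
    rw [Int.cast_natCast, ZMod.natCast_self]⟩

variable {N M d : ℕ} (h : d * N = M)

theorem mulLeftHom_intCast (y : ℤ) : mulLeftHom d h y = ((d * y : ℤ) : ZMod M) :=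
  lift_coe _ _ _

theorem mulLeftHom_injective (hd : d ≠ 0) : Injective (mulLeftHom d h) := by
  refine (injective_iff_map_eq_zero _).mpr fun y hy => ?_
  obtain ⟨y, rfl⟩ := intCast_surjective y
  rw [mulLeftHom_intCast, intCast_zmod_eq_zero_iff_dvd, ← h, Nat.cast_mul,
    mul_dvd_mul_iff_left (by exact_mod_cast hd)] at hy
  exact (intCast_zmod_eq_zero_iff_dvd _ _).mpr hy

theorem intCast_mem_range_mulLeftHom {x : ℤ} (hx : (d : ℤ) ∣ x) :
    (x : ZMod M) ∈ Set.range (mulLeftHom d h) := by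
  obtain ⟨y, rfl⟩ := hx
  exact ⟨y, mulLeftHom_intCast h y⟩

end ZMod

theorem Int.pow_dvd_of_pow_dvd_mul_sq_sub {p : ℕ} (hp : p.Prime) {a m k : ℕ}
    (hk : a + 2 * m ≤ k) {A B x : ℤ} (hA : ¬ (p : ℤ) ∣ A)
    (hx : (p : ℤ) ^ k ∣ p ^ a * A * x ^ 2 - p ^ (a + 2 * m) * B) :
    (p : ℤ) ^ m ∣ x := by
  have hpa : (p : ℤ) ^ a ≠ 0 := pow_ne_zero _ (by exact_mod_cast hp.ne_zero)
  have h1 : (p : ℤ) ^ a * (p : ℤ) ^ (2 * m) ∣ (p : ℤ) ^ a * (A * x ^ 2) := by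
    rw [← pow_add]
    have := ((pow_dvd_pow _ hk).trans hx).add (dvd_mul_right ((p : ℤ) ^ (a + 2 * m)) B)
    rwa [sub_add_cancel, mul_assoc] at this
  have h2 : IsCoprime ((p : ℤ) ^ (2 * m)) A :=
    ((Nat.prime_iff_prime_int.mp hp).irreducible.coprime_iff_not_dvd.mpr hA).pow_left
  rw [← Int.pow_dvd_pow_iff two_ne_zero, ← pow_mul, mul_comm m]
  exact h2.dvd_of_dvd_mul_left ((mul_dvd_mul_iff_left hpa).mp h1)

theorem Int.pow_dvd_mul_sq_sub_iff {p : ℕ} (hp : p ≠ 0) {a m n : ℕ} (A B y : ℤ) :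
    (p : ℤ) ^ (a + 2 * m + n) ∣ p ^ a * A * (p ^ m * y) ^ 2 - p ^ (a + 2 * m) * B ↔
      (p : ℤ) ^ n ∣ A * y ^ 2 - B := by
  rw [show (p : ℤ) ^ a * A * (p ^ m * y) ^ 2 - p ^ (a + 2 * m) * B =
      p ^ (a + 2 * m) * (A * y ^ 2 - B) by ring, pow_add,
    mul_dvd_mul_iff_left (pow_ne_zero _ (by exact_mod_cast hp))]

theorem legendreSym.not_dvd_of_eq_one {p : ℕ} [Fact p.Prime] {c : ℤ} (h : legendreSym p c = 1) :
    ¬ (p : ℤ) ∣ c := by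
  rw [← ZMod.intCast_zmod_eq_zero_iff_dvd, ← legendreSym.eq_zero_iff, h]
  exact one_ne_zero

theorem ZMod.card_mul_sq_eq_of_legendreSym_eq_one {p : ℕ} [Fact p.Prime] (hp : p ≠ 2) {n : ℕ}
    (hn : n ≠ 0) {A B : ℤ} (hAB : legendreSym p (A * B) = 1) :
    Nat.card {z : ZMod (p ^ n) // (A : ZMod (p ^ n)) * z ^ 2 = B} = 2 := by
  have := ZMod.isLocalRing_prime_pow p hn
  have hndvd := legendreSym.not_dvd_of_eq_one hAB
  obtain ⟨s, hs⟩ := PadicInt.exists_sq_eq_intCast hp hndvd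
    ((legendreSym.eq_one_iff p (by rwa [ne_eq, ZMod.intCast_zmod_eq_zero_iff_dvd])).mp hAB)
  set d := PadicInt.toZModPow n s
  have hd : d ^ 2 = A * B := by simpa using congrArg (PadicInt.toZModPow n) hs
  have hA : IsUnit (A : ZMod (p ^ n)) :=
    (ZMod.isUnit_intCast_prime_pow_iff hn A).mpr fun h => hndvd (h.mul_right B)
  have hdu : IsUnit d := (isUnit_pow_iff two_ne_zero).mp <| by
    rw [hd, ← Int.cast_mul]; exact (ZMod.isUnit_intCast_prime_pow_iff hn _).mpr hndvd
  have h2 : IsUnit (2 : ZMod (p ^ n)) := by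
    have := (ZMod.isUnit_intCast_prime_pow_iff hn 2).mpr fun h => hp <|
      (Nat.prime_dvd_prime_iff_eq Fact.out Nat.prime_two).mp (by exact_mod_cast h)
    simpa using this
  refine (Nat.card_congr (Equiv.subtypeEquiv (Units.mulLeft hA.unit) fun z => ?_)).trans
    (IsLocalRing.card_sq_eq_sq h2 hdu)
  rw [Units.mulLeft_apply, IsUnit.unit_spec, hd, mul_pow, sq (A : ZMod (p ^ n)), mul_assoc,
    hA.mul_right_inj]

theorem ZMod.intCast_mul_sq_eq_intCast_iff {N : ℕ} (c y e : ℤ) :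
    (c : ZMod N) * (y : ZMod N) ^ 2 = e ↔ (N : ℤ) ∣ c * y ^ 2 - e := by
  rw [← Int.cast_pow, ← Int.cast_mul, ZMod.intCast_eq_intCast_iff_dvd_sub, dvd_sub_comm]

theorem ZMod.card_pow_mul_sq_eq {p : ℕ} [Fact p.Prime] (hp : p ≠ 2) {a m k : ℕ}
    (hk : a + 2 * m < k) {A B : ℤ} (hAB : legendreSym p (A * B) = 1) :
    Nat.card {x : ZMod (p ^ k) //
      ((p ^ a * A : ℤ) : ZMod (p ^ k)) * x ^ 2 = ((p ^ (a + 2 * m) * B : ℤ) : ZMod (p ^ k))} =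
      2 * p ^ (a + m) := by
  obtain ⟨n, hn, rfl⟩ : ∃ n, n ≠ 0 ∧ k = a + 2 * m + n :=
    ⟨k - (a + 2 * m), by omega, by omega⟩
  have hnle : n ≤ a + m + n := by omega
  have hp0 : p ≠ 0 := (Fact.out : p.Prime).ne_zero
  let g := ZMod.mulLeftHom (p ^ m) (N := p ^ (a + m + n)) (M := p ^ (a + 2 * m + n))
    (by rw [← pow_add]; ring_nf)
  let f := (ZMod.castHom (pow_dvd_pow p hnle) (ZMod (p ^ n))).toAddMonoidHom
  set S := {x : ZMod (p ^ (a + 2 * m + n)) |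
    ((p ^ a * A : ℤ) : ZMod _) * x ^ 2 = ((p ^ (a + 2 * m) * B : ℤ) : ZMod _)}
  set T := {z : ZMod (p ^ n) | (A : ZMod (p ^ n)) * z ^ 2 = B}
  have hS : S ⊆ Set.range g := by
    intro x hx
    obtain ⟨x, rfl⟩ := ZMod.intCast_surjective x
    rw [Set.mem_ofPred_eq, ZMod.intCast_mul_sq_eq_intCast_iff] at hx
    push_cast at hx
    exact ZMod.intCast_mem_range_mulLeftHom _ <| Int.pow_dvd_of_pow_dvd_mul_sq_sub Fact.out
      (by omega) (fun h => legendreSym.not_dvd_of_eq_one hAB (h.mul_right B)) hx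
  have hpre : g ⁻¹' S = f ⁻¹' T := by
    ext y
    obtain ⟨y, rfl⟩ := ZMod.intCast_surjective y
    simp only [Set.mem_preimage, Set.mem_ofPred_eq, S, T, g, f, ZMod.mulLeftHom_intCast,
      RingHom.toAddMonoidHom_eq_coe, AddMonoidHom.coe_coe, map_intCast,
      ZMod.intCast_mul_sq_eq_intCast_iff]
    push_cast
    exact Int.pow_dvd_mul_sq_sub_iff hp0 A B y
  calc Nat.card S = Nat.card (g ⁻¹' S) :=
        (Nat.card_preimage_of_injective (ZMod.mulLeftHom_injective _ (pow_ne_zero _ hp0)) hS).symm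
    _ = Nat.card f.ker * Nat.card T := by
        rw [hpre, f.card_preimage_of_surjective (ZMod.castHom_surjective (pow_dvd_pow p hnle))]
    _ = 2 * p ^ (a + m) := by
        rw [ZMod.card_ker_castHom_pow hp0 hnle, mul_comm, Nat.add_sub_cancel]
        exact congrArg (· * _) (ZMod.card_mul_sq_eq_of_legendreSym_eq_one hp hn hAB)

theorem one_dim_count_odd_prime_general (p k : ℕ) [Fact p.Prime] (hodd : Odd p)
    (Q : ℤ) (t : ℕ)
    (hvt : padicValNat p t < k)
    (hle : padicValInt p Q ≤ padicValNat p t)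
    (heven : Even (padicValNat p t - padicValInt p Q))
    (hleg : legendreSym p ((Q / (p : ℤ) ^ padicValInt p Q) *
      ((t / p ^ padicValNat p t : ℕ) : ℤ)) = 1) :
    Nat.card {x : ZMod (p ^ k) // (Q : ZMod (p ^ k)) * x ^ 2 = (t : ZMod (p ^ k))} =
      2 * p ^ ((padicValNat p t + padicValInt p Q) / 2) := by
  set a := padicValInt p Q
  set b := padicValNat p t
  obtain ⟨m, hm⟩ := heven
  have hb : b = a + 2 * m := by omega
  have hQ : Q = p ^ a * (Q / p ^ a) := (Int.mul_ediv_cancel' (padicValInt_dvd Q)).symm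
  have ht : (t : ℤ) = p ^ (a + 2 * m) * ((t / p ^ b : ℕ) : ℤ) := by
    rw [← hb]; exact_mod_cast (Nat.mul_div_cancel' pow_padicValNat_dvd).symm
  rw [show (b + a) / 2 = a + m by omega, ← Int.cast_natCast t, ht, hQ]
  exact ZMod.card_pow_mul_sq_eq (hodd.ne_two_of_dvd_nat dvd_rfl) (by omega) hleg

/-- under the solvability conditions, Q·x² ≡ t (mod p^k) has
exactly 2·p^((ord_p(t)+ord_p(Q))/2) solutions. -/
theorem one_dim_count_odd_prime (p k : ℕ) [Fact p.Prime] (hodd : Odd p)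
    (hk : 0 < k) (Q : ℤ) (hQ : Q ≠ 0) (t : ℕ) (ht : 0 < t) (htk : t < p ^ k)
    (hvt : padicValNat p t < k)
    (hle : padicValInt p Q ≤ padicValNat p t)
    (heven : Even (padicValNat p t - padicValInt p Q))
    (hleg : legendreSym p ((Q / (p : ℤ) ^ padicValInt p Q) *
      ((t / p ^ padicValNat p t : ℕ) : ℤ)) = 1) :
    Nat.card {x : ZMod (p ^ k) // (Q : ZMod (p ^ k)) * x ^ 2 = (t : ZMod (p ^ k))} =
      2 * p ^ ((padicValNat p t + padicValInt p Q) / 2) :=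
  one_dim_count_odd_prime_general p k hodd Q t hvt hle heven hleg
end

section
/- Let k ≥ 1 and let Q, t be integers with ord_2(t) < k. Then Q·x² ≡ t (mod 2^k) has a solution in Z/2^kZ if and only if ord_2(t) − ord_2(Q) is nonnegative and even, and cop_2(Q) ≡ cop_2(t) (mod min(8, 2^{k−ord_2(t)})). -/
lemma aux_odd_sq_sub_one (y : ℤ) (hy : y % 2 = 1) : (8:ℤ) ∣ y^2 - 1 := by
  obtain ⟨c, rfl⟩ : ∃ c, y = 2*c + 1 := ⟨y/2, by omega⟩
  obtain ⟨d, hd⟩ := Int.even_mul_succ_self c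
  exact ⟨d, by linear_combination 4*hd⟩

lemma aux_pow2_eq {i j : ℕ} {u w : ℤ} (hu : u % 2 = 1) (hw : w % 2 = 1)
    (h : 2^i * u = 2^j * w) : i = j ∧ u = w := by
  have key : ∀ i j : ℕ, ∀ u w : ℤ, u % 2 = 1 → w % 2 = 1 → i ≤ j →
      (2:ℤ)^i * u = 2^j * w → i = j := by
    intro i j u w hu hw hij h
    by_contra hne
    have hj : (2:ℤ)^j = 2^i * (2 * 2^(j-i-1)) := by
      have h' : (2:ℤ)^(i + (1 + (j-i-1))) = 2^i * (2^1 * 2^(j-i-1)) := by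
        rw [pow_add, pow_add]
      rw [show i + (1 + (j-i-1)) = j from by omega] at h'
      simpa using h'
    rw [hj, mul_assoc] at h
    have h2 := mul_left_cancel₀ (pow_ne_zero i (two_ne_zero)) h
    have : u % 2 = 0 := by rw [h2, mul_assoc, Int.mul_emod_right]
    omega
  have hij : i = j := by
    rcases le_total i j with hle | hle
    · exact key i j u w hu hw hle h
    · exact (key j i w u hw hu hle h.symm).symm
  subst hij
  exact ⟨rfl, mul_left_cancel₀ (pow_ne_zero i two_ne_zero) h⟩

lemma aux_min8 (m : ℕ) : (min 8 (2^m) : ℤ) = 2^(min m 3) := by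
  rcases le_total m 3 with h | h
  · have h1 : (2:ℤ)^m ≤ 8 := by
      calc (2:ℤ)^m ≤ 2^3 := by
            apply pow_le_pow_right₀ <;> norm_num [h]
        _ = 8 := by norm_num
    rw [min_eq_right h1, min_eq_left h]
  · have h1 : (8:ℤ) ≤ 2^m := by
      calc (8:ℤ) = 2^3 := by norm_num
        _ ≤ 2^m := by apply pow_le_pow_right₀ <;> norm_num [h]
    rw [min_eq_left h1, min_eq_right h]
    norm_num

lemma aux_int_decomp (x : ℤ) (hx : x ≠ 0) :
    ∃ u : ℤ, u % 2 = 1 ∧ x = 2 ^ padicValInt 2 x * u ∧ x / 2 ^ padicValInt 2 x = u := by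
  have hdvd : (2:ℤ) ^ padicValInt 2 x ∣ x := by
    have := padicValInt_dvd (p := 2) x
    exact_mod_cast this
  refine ⟨x / 2 ^ padicValInt 2 x, ?_, (Int.mul_ediv_cancel' hdvd).symm, rfl⟩
  have hnd : ¬ (2:ℤ) ∣ x / 2 ^ padicValInt 2 x := by
    rintro ⟨c, hc⟩
    have h2 : ((2:ℕ):ℤ) ^ (padicValInt 2 x + 1) ∣ x := by
      refine ⟨c, ?_⟩
      calc x = 2 ^ padicValInt 2 x * (x / 2 ^ padicValInt 2 x) := (Int.mul_ediv_cancel' hdvd).symm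
        _ = 2 ^ padicValInt 2 x * (2*c) := by rw [hc]
        _ = ((2:ℕ):ℤ) ^ (padicValInt 2 x + 1) * c := by push_cast; ring
    rcases (padicValInt_dvd_iff (p := 2) (padicValInt 2 x + 1) x).mp h2 with h0 | hle
    · exact hx h0
    · omega
  generalize x / 2 ^ padicValInt 2 x = u at hnd
  omega

lemma aux_nat_decomp (t : ℕ) (ht : t ≠ 0) :
    ∃ u : ℕ, u % 2 = 1 ∧ t = 2 ^ padicValNat 2 t * u ∧ t / 2 ^ padicValNat 2 t = u := by
  have hdvd : 2 ^ padicValNat 2 t ∣ t := pow_padicValNat_dvd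
  refine ⟨t / 2 ^ padicValNat 2 t, ?_, (Nat.mul_div_cancel' hdvd).symm, rfl⟩
  have hnd : ¬ 2 ∣ t / 2 ^ padicValNat 2 t := by
    rintro ⟨c, hc⟩
    have h2 : 2 ^ (padicValNat 2 t + 1) ∣ t := ⟨c, by
      calc t = 2 ^ padicValNat 2 t * (t / 2 ^ padicValNat 2 t) := (Nat.mul_div_cancel' hdvd).symm
        _ = 2 ^ padicValNat 2 t * (2*c) := by rw [hc]
        _ = 2 ^ (padicValNat 2 t + 1) * c := by ring⟩
    exact pow_succ_padicValNat_not_dvd ht h2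
  generalize t / 2 ^ padicValNat 2 t = u at hnd
  omega

lemma aux_lift (Q' t' : ℤ) (hQ : Q' % 2 = 1) (ht : t' % 2 = 1) (h8 : (8:ℤ) ∣ Q' - t') :
    ∀ m, 3 ≤ m → ∃ y : ℤ, y % 2 = 1 ∧ (2:ℤ)^m ∣ Q' * y^2 - t' := by
  intro m hm
  induction m, hm using Nat.le_induction with
  | base =>
    refine ⟨1, by norm_num, ?_⟩
    rw [show Q'*1^2 - t' = Q' - t' from by ring, show (2:ℤ)^3 = 8 from by norm_num]
    exact h8
  | succ n hn ih =>
    obtain ⟨y, hy, c, hc⟩ := ih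
    obtain ⟨l, rfl⟩ : ∃ l, n = l + 3 := ⟨n - 3, by omega⟩
    have hQy : (Q' * y) % 2 = 1 := by
      rw [Int.mul_emod, hQ, hy]
      norm_num
    obtain ⟨e, he⟩ : ∃ e:ℤ, c * (1 + Q'*y) = 2*e := by
      obtain ⟨z, hz⟩ : ∃ z, Q'*y = 2*z + 1 := by
        generalize Q'*y = w at hQy
        exact ⟨w/2, by omega⟩
      exact ⟨c*(1+z), by rw [hz]; ring⟩
    refine ⟨y + 2^(l+2)*c, ?_, e + 2^l*Q'*c^2, ?_⟩
    · rw [show y + (2:ℤ)^(l+2)*c = y + 2*(2^(l+1)*c) from by ring,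
        Int.add_mul_emod_self_left]
      exact hy
    · linear_combination hc + 8*(2:ℤ)^l*he

/-- Q·x² ≡ t (mod 2^k) is solvable iff ord_2(t) − ord_2(Q) is
nonnegative and even and cop_2(Q) ≡ cop_2(t) (mod min(8, 2^(k−ord_2(t)))). -/
theorem one_dim_representable_iff_two (k : ℕ) (hk : 0 < k) (Q : ℤ) (hQ : Q ≠ 0)
    (t : ℕ) (ht : 0 < t) (htk : t < 2 ^ k) (hvt : padicValNat 2 t < k) :
    (∃ x : ZMod (2 ^ k), (Q : ZMod (2 ^ k)) * x ^ 2 = (t : ZMod (2 ^ k))) ↔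
      padicValInt 2 Q ≤ padicValNat 2 t ∧
        Even (padicValNat 2 t - padicValInt 2 Q) ∧
        (Q / 2 ^ padicValInt 2 Q) % (min 8 (2 ^ (k - padicValNat 2 t)) : ℤ) =
          ((t / 2 ^ padicValNat 2 t : ℕ) : ℤ) %
            (min 8 (2 ^ (k - padicValNat 2 t)) : ℤ) := by
  haveI : NeZero (2^k) := ⟨by positivity⟩
  have hz : (∃ x : ZMod (2 ^ k), (Q : ZMod (2 ^ k)) * x ^ 2 = (t : ZMod (2 ^ k))) ↔
      ∃ x : ℤ, (2^k : ℤ) ∣ Q * x^2 - t := by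
    constructor
    · rintro ⟨x, hx⟩
      obtain ⟨x₀, rfl⟩ := ZMod.intCast_surjective x
      refine ⟨x₀, ?_⟩
      have h0 : ((Q * x₀^2 - t : ℤ) : ZMod (2^k)) = 0 := by
        push_cast
        rw [hx]
        ring
      have := (ZMod.intCast_zmod_eq_zero_iff_dvd _ _).mp h0
      exact_mod_cast this
    · rintro ⟨x, hx⟩
      refine ⟨(x : ZMod (2^k)), ?_⟩
      have h0 : ((Q * x^2 - t : ℤ) : ZMod (2^k)) = 0 := by
        rw [ZMod.intCast_zmod_eq_zero_iff_dvd]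
        exact_mod_cast hx
      push_cast at h0
      linear_combination h0
  rw [hz]
  set a := padicValInt 2 Q with ha
  set b := padicValNat 2 t with hb
  set m := k - b with hm
  have hm1 : 1 ≤ m := by omega
  rw [aux_min8 m]
  set j := min m 3 with hj
  have hj3 : j ≤ 3 := by omega
  have hjm : j ≤ m := by omega
  obtain ⟨Q', hQodd, hQdec, hQ'eq⟩ := aux_int_decomp Q hQ
  obtain ⟨t'', htodd', htdec, ht''eq⟩ := aux_nat_decomp t (by omega)
  rw [hQ'eq, ht''eq]
  have htodd : (t'':ℤ) % 2 = 1 := by omega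
  have htz : (t:ℤ) = 2^b * (t'':ℤ) := by exact_mod_cast htdec
  have e1 : (2:ℤ)^k = 2^b * 2^m := by rw [← pow_add]; congr 1; omega
  constructor
  · rintro ⟨x, c, hc⟩
    have hx0 : x ≠ 0 := by
      rintro rfl
      have hd : ((2^k : ℕ):ℤ) ∣ (t:ℤ) := by
        refine ⟨-c, ?_⟩
        push_cast
        linear_combination -hc
      have := Nat.le_of_dvd ht (Int.natCast_dvd_natCast.mp hd)
      omega
    obtain ⟨x', hxodd, hxdec, _⟩ := aux_int_decomp x hx0
    set v := padicValInt 2 x with hv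
    rw [hQdec, hxdec, htz, e1] at hc
    have key : (2:ℤ)^(a+2*v) * (Q' * x'^2) = 2^b * ((t'':ℤ) + 2^m * c) := by
      have e2 : (2:ℤ)^(a+2*v) = 2^a * (2^v)^2 := by
        rw [← pow_mul, ← pow_add]
        congr 1
        omega
      linear_combination hc + (Q'*x'^2)*e2
    have hx2 : x'^2 % 2 = 1 := by
      rw [sq, Int.mul_emod, hxodd]
      norm_num
    have hL : (Q' * x'^2) % 2 = 1 := by
      rw [Int.mul_emod, hQodd, hx2]
      norm_num
    have hR : ((t'':ℤ) + 2^m * c) % 2 = 1 := by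
      have hsp : (2:ℤ)^m = 2 * 2^(m-1) := by
        have h' := pow_succ (2:ℤ) (m-1)
        rw [show (m-1)+1 = m from by omega] at h'
        rw [h']
        ring
      rw [hsp, mul_assoc, Int.add_mul_emod_self_left]
      exact htodd
    obtain ⟨hab, hodd_eq⟩ := aux_pow2_eq hL hR key
    refine ⟨by omega, ⟨v, by omega⟩, ?_⟩
    have d1 : (2:ℤ)^j ∣ Q' * (1 - x'^2) := by
      have h8 : (8:ℤ) ∣ Q' * (1 - x'^2) := by
        obtain ⟨d, hd⟩ := aux_odd_sq_sub_one x' hxodd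
        exact ⟨-Q'*d, by linear_combination -Q'*hd⟩
      calc (2:ℤ)^j ∣ 2^3 := pow_dvd_pow 2 hj3
        _ = 8 := by norm_num
        _ ∣ _ := h8
    have d2 : (2:ℤ)^j ∣ Q' * x'^2 - t'' := by
      calc (2:ℤ)^j ∣ 2^m := pow_dvd_pow 2 hjm
        _ ∣ Q' * x'^2 - t'' := ⟨c, by linear_combination hodd_eq⟩
    have hdd : (2:ℤ)^j ∣ (t'':ℤ) - Q' := by
      obtain ⟨u1, hu1⟩ := d1
      obtain ⟨u2, hu2⟩ := d2
      exact ⟨-u1 - u2, by linear_combination -hu1 - hu2⟩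
    exact Int.modEq_iff_dvd.mpr hdd
  · rintro ⟨hab, hev, hmod⟩
    obtain ⟨w, hw⟩ := hev
    have hdvdj : (2:ℤ)^j ∣ Q' - (t'':ℤ) := by
      obtain ⟨u, hu⟩ := Int.ModEq.dvd (hmod : Q' ≡ (t'':ℤ) [ZMOD 2^j])
      exact ⟨-u, by linear_combination -hu⟩
    have hy : ∃ y : ℤ, y % 2 = 1 ∧ (2:ℤ)^m ∣ Q' * y^2 - t'' := by
      rcases le_or_gt m 3 with h3 | h3
      · have hjm' : j = m := by omega
        refine ⟨1, by norm_num, ?_⟩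
        rw [show Q'*1^2 - (t'':ℤ) = Q' - t'' from by ring, ← hjm']
        exact hdvdj
      · have hjm' : j = 3 := by omega
        have h8 : (8:ℤ) ∣ Q' - t'' := by
          rw [hjm', show (2:ℤ)^3 = 8 from by norm_num] at hdvdj
          exact hdvdj
        exact aux_lift Q' (t'':ℤ) hQodd htodd h8 m (by omega)
    obtain ⟨y, hy1, d, hd⟩ := hy
    refine ⟨2^w * y, d, ?_⟩
    have e2b : (2:ℤ)^b = 2^a * (2^w)^2 := by
      rw [← pow_mul, ← pow_add]
      congr 1
      omega
    rw [hQdec, htz, e1]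
    linear_combination (2:ℤ)^b * hd - Q'*y^2*e2b
end

section
/- Let k ≥ 1 and Q, t integers with ord_2(t) < k, k − ord_2(t) ≥ 3, ord_2(Q) ≤ ord_2(t), ord_2(t) − ord_2(Q) even, and cop_2(Q) ≡ cop_2(t) (mod 8). Then the number of x ∈ Z/2^kZ with Q·x² ≡ t (mod 2^k) is exactly 4·2^{(ord_2(t)+ord_2(Q))/2}. -/
lemma castHom_eq {s t : ℕ} (h : t ≤ s) (x : ZMod (2^s)) :
    ZMod.castHom (pow_dvd_pow 2 h) (ZMod (2^t)) x = ((x.val : ℕ) : ZMod (2^t)) := by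
  haveI : NeZero (2^s) := ⟨(Nat.pow_pos (by norm_num)).ne'⟩
  conv_lhs => rw [← ZMod.natCast_rightInverse x]
  rw [map_natCast]

noncomputable def pow2FiberEquiv {s t : ℕ} (h : t ≤ s) (P : ZMod (2^t) → Prop) :
    {z : ZMod (2^s) // P (ZMod.castHom (pow_dvd_pow 2 h) (ZMod (2^t)) z)} ≃
      {w : ZMod (2^t) // P w} × ZMod (2^(s-t)) := by
  haveI : NeZero (2^s) := ⟨(Nat.pow_pos (by norm_num)).ne'⟩
  haveI : NeZero (2^t) := ⟨(Nat.pow_pos (by norm_num)).ne'⟩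
  haveI : NeZero (2^(s-t)) := ⟨(Nat.pow_pos (by norm_num)).ne'⟩
  have e3 : 2^t * 2^(s-t) = 2^s := by rw [← pow_add]; congr 1; omega
  have cast_key : ∀ (w : ZMod (2^t)) (m : ℕ),
      (((w.val + 2^t * m : ℕ)) : ZMod (2^t)) = w := by
    intro w m
    rw [Nat.cast_add, Nat.cast_mul, ZMod.natCast_self, zero_mul, add_zero,
      ZMod.natCast_rightInverse]
  refine
  { toFun := fun z => (⟨_, z.2⟩, ((z.1.val / 2^t : ℕ) : ZMod (2^(s-t)))),
    invFun := fun p => ⟨((p.1.1.val + 2^t * p.2.val : ℕ) : ZMod (2^s)), ?_⟩,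
    left_inv := ?_, right_inv := ?_ }
  · rw [map_natCast, cast_key]; exact p.1.2
  · rintro ⟨z, hz⟩
    apply Subtype.ext
    dsimp only
    rw [castHom_eq h, ZMod.val_natCast, ZMod.val_natCast]
    set q := z.val / 2^t with hq
    set D := 2^(s-t) with hD
    have e1 : z.val % 2^t + 2^t * q = z.val := Nat.mod_add_div _ _
    have e2 : q % D + D * (q / D) = q := Nat.mod_add_div _ _
    have key : z.val = (z.val % 2^t + 2^t * (q % D)) + 2^s * (q / D) := by
      calc z.val = z.val % 2^t + 2^t * q := e1.symm
        _ = z.val % 2^t + 2^t * (q % D + D * (q / D)) := by rw [e2]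
        _ = (z.val % 2^t + 2^t * (q % D)) + (2^t * D) * (q / D) := by ring
        _ = _ := by rw [e3]
    conv_rhs => rw [← ZMod.natCast_rightInverse z, key, Nat.cast_add, Nat.cast_mul,
      ZMod.natCast_self]
    rw [zero_mul, add_zero, Nat.cast_add]
  · rintro ⟨⟨w, hw⟩, d⟩
    have hwlt : w.val < 2^t := ZMod.val_lt w
    have hdlt : d.val < 2^(s-t) := ZMod.val_lt d
    have hNlt : w.val + 2^t * d.val < 2^s := by
      have h1 : w.val + 2^t * d.val < 2^t * (d.val + 1) := by
        rw [mul_add, mul_one]; omega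
      have h2 : 2^t * (d.val + 1) ≤ 2^s := by
        rw [← e3]; exact Nat.mul_le_mul_left _ hdlt
      omega
    have hvN : ((w.val + 2^t * d.val : ℕ) : ZMod (2^s)).val = w.val + 2^t * d.val :=
      ZMod.val_natCast_of_lt hNlt
    refine Prod.ext (Subtype.ext ?_) ?_
    · dsimp only
      rw [map_natCast, cast_key]
    · dsimp only
      rw [hvN, Nat.add_mul_div_left _ _ (Nat.pow_pos (by norm_num)),
        Nat.div_eq_of_lt hwlt, zero_add, ZMod.natCast_rightInverse]

lemma pow2_fiber_card {s t : ℕ} (h : t ≤ s) (P : ZMod (2^t) → Prop) :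
    Nat.card {z : ZMod (2^s) // P (ZMod.castHom (pow_dvd_pow 2 h) (ZMod (2^t)) z)} =
      Nat.card {w : ZMod (2^t) // P w} * 2^(s-t) := by
  rw [Nat.card_congr (pow2FiberEquiv h P), Nat.card_prod, Nat.card_zmod]

lemma card_sqrt_one {n : ℕ} (hn : 3 ≤ n) :
    Nat.card {s : ZMod (2^n) // s^2 = 1} = 4 := by
  haveI : NeZero (2^n) := ⟨(Nat.pow_pos (by norm_num)).ne'⟩
  set c2 : ZMod (2^n) := (2:ZMod (2^n))^(n-1) with hc2
  have hpow0 : (2 : ZMod (2^n))^n = 0 := by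
    have h2z : ((2^n : ℕ) : ZMod (2^n)) = 0 := ZMod.natCast_self _
    push_cast at h2z
    exact h2z
  have hc2sq : c2^2 = 0 := by
    have : c2^2 = (2:ZMod (2^n))^n * (2:ZMod (2^n))^(n-2) := by
      rw [hc2, ← pow_mul, ← pow_add]; congr 1; omega
    rw [this, hpow0, zero_mul]
  have h2c2 : 2 * c2 = 0 := by
    have : (2:ZMod (2^n)) * c2 = (2:ZMod (2^n))^n := by
      rw [hc2, ← pow_succ']; congr 1; omega
    rw [this, hpow0]
  have hp1 : (2:ℤ)^n = 2 * 2^(n-1) := by rw [← pow_succ']; congr 1; omega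
  have h4 : (4:ℤ) ≤ 2^(n-1) := by
    calc (4:ℤ) = 2^2 := by norm_num
    _ ≤ 2^(n-1) := pow_le_pow_right₀ (by norm_num) (by omega)
  have key_ne : ∀ a b : ℤ, 0 < b - a → b - a < 2^n →
      ((a : ZMod (2^n)) ≠ (b : ZMod (2^n))) := by
    intro a b h1 h2 h
    rw [ZMod.intCast_eq_intCast_iff] at h
    have hd := Int.ModEq.dvd h
    push_cast at hd
    have := Int.le_of_dvd h1 hd
    omega
  have ne12 : (1 : ZMod (2^n)) ≠ -1 := fun h =>
    key_ne (-1) 1 (by omega) (by omega) (by push_cast; linear_combination -h)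
  have ne13 : (1 : ZMod (2^n)) ≠ c2 + 1 := fun h =>
    key_ne 1 (2^(n-1)+1) (by omega) (by omega) (by push_cast; linear_combination h)
  have ne14 : (1 : ZMod (2^n)) ≠ c2 - 1 := fun h =>
    key_ne 1 (2^(n-1)-1) (by omega) (by omega) (by push_cast; linear_combination h)
  have ne23 : (-1 : ZMod (2^n)) ≠ c2 + 1 := fun h =>
    key_ne (-1) (2^(n-1)+1) (by omega) (by omega) (by push_cast; linear_combination h)
  have ne24 : (-1 : ZMod (2^n)) ≠ c2 - 1 := fun h =>
    key_ne (-1) (2^(n-1)-1) (by omega) (by omega) (by push_cast; linear_combination h)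
  have ne34 : c2 + 1 ≠ c2 - 1 := fun h =>
    key_ne (2^(n-1)-1) (2^(n-1)+1) (by omega) (by omega) (by push_cast; linear_combination -h)
  have main : ∀ s : ZMod (2^n), s^2 = 1 ↔ (s = 1 ∨ s = -1 ∨ s = c2+1 ∨ s = c2-1) := by
    intro s
    constructor
    · intro hs
      have hv : ((s.val : ℕ) : ZMod (2^n)) = s := ZMod.natCast_rightInverse s
      set X : ℤ := (s.val : ℤ) with hX
      have hXs : ((X : ℤ) : ZMod (2^n)) = s := by rw [hX, Int.cast_natCast, hv]
      have hdvd : (2:ℤ)^n ∣ X^2 - 1 := by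
        have h0 : ((X^2 - 1 : ℤ) : ZMod (2^n)) = 0 := by
          rw [Int.cast_sub, Int.cast_pow, Int.cast_one, hXs, hs, sub_self]
        have := (ZMod.intCast_zmod_eq_zero_iff_dvd _ _).mp h0
        push_cast at this
        exact this
      have conclude : ∀ c : ℤ, (2:ℤ)^n ∣ c - X → ((c : ℤ) : ZMod (2^n)) = s := by
        intro c hc
        rw [← hXs, ZMod.intCast_eq_intCast_iff]
        exact (Int.modEq_iff_dvd.mpr (by push_cast; exact hc)).symm
      rcases Int.even_or_odd X with he | ho
      · exfalso
        have h2X : (2:ℤ) ∣ X := he.two_dvd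
        have h2 : (2:ℤ) ∣ X^2 - 1 := dvd_trans ⟨2^(n-1), hp1⟩ hdvd
        have hXX : (2:ℤ) ∣ X^2 := by rw [sq]; exact h2X.mul_right X
        have : (2:ℤ) ∣ 1 := by simpa using dvd_sub hXX h2
        norm_num at this
      · obtain ⟨y, hy⟩ := ho
        have h4' : X^2 - 1 = 4*(y*(y+1)) := by rw [hy]; ring
        have hp4 : (2:ℤ)^n = 4 * 2^(n-2) := by
          rw [show (4:ℤ) = 2^2 by norm_num, ← pow_add]; congr 1; omega
        have hdvd2 : (2:ℤ)^(n-2) ∣ y*(y+1) := by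
          have h' := hdvd
          rw [h4', hp4] at h'
          exact (mul_dvd_mul_iff_left (by norm_num : (4:ℤ) ≠ 0)).mp h'
        have hp2 : (2:ℤ)^n = 2^(n-2)*2*2 := by
          rw [mul_assoc, show ((2:ℤ)*2) = 2^2 by norm_num, ← pow_add]; congr 1; omega
        have hp3 : (2:ℤ)^(n-1) = 2^(n-2)*2 := by rw [← pow_succ]; congr 1; omega
        rcases Int.even_or_odd y with hye | hyo
        · have hy1 : ¬ (2:ℤ) ∣ (y+1) := by
            intro hdv
            obtain ⟨d, hd⟩ := hdv
            obtain ⟨c, hc⟩ := hye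
            omega
          obtain ⟨e, he⟩ := Int.prime_two.pow_dvd_of_dvd_mul_right _ hy1 hdvd2
          rcases Int.even_or_odd e with ⟨f, hf⟩ | ⟨f, hf⟩
          · left
            rw [show (1 : ZMod (2^n)) = ((1:ℤ) : ZMod (2^n)) by push_cast; ring]
            exact (conclude 1 ⟨-f, by rw [hy, he, hf, hp2]; ring⟩).symm
          · right; right; left
            rw [show c2 + 1 = ((2^(n-1)+1 : ℤ) : ZMod (2^n)) by push_cast; ring]
            exact (conclude _ ⟨-f, by rw [hy, he, hf, hp2, hp3]; ring⟩).symm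
        · have hy0 : ¬ (2:ℤ) ∣ y := by
            intro hdv
            obtain ⟨d, hd⟩ := hdv
            obtain ⟨c, hc⟩ := hyo
            omega
          obtain ⟨e, he⟩ := Int.prime_two.pow_dvd_of_dvd_mul_left _ hy0 hdvd2
          have hyv : y = 2^(n-2)*e - 1 := by linarith [he]
          rcases Int.even_or_odd e with ⟨f, hf⟩ | ⟨f, hf⟩
          · right; left
            rw [show (-1 : ZMod (2^n)) = ((-1:ℤ) : ZMod (2^n)) by push_cast; ring]
            exact (conclude _ ⟨-f, by rw [hy, hyv, hf, hp2]; ring⟩).symm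
          · right; right; right
            rw [show c2 - 1 = ((2^(n-1)-1 : ℤ) : ZMod (2^n)) by push_cast; ring]
            exact (conclude _ ⟨-f, by rw [hy, hyv, hf, hp2, hp3]; ring⟩).symm
    · intro hs
      rcases hs with rfl | rfl | rfl | rfl
      · exact one_pow 2
      · exact neg_one_sq
      · rw [add_sq, hc2sq, one_pow, mul_one, h2c2]; ring
      · rw [sub_sq, hc2sq, one_pow, mul_one, h2c2]; ring
  rw [Nat.card_congr (Equiv.subtypeEquivRight main), Nat.card_eq_fintype_card,
    Fintype.card_subtype]
  have hfil : Finset.univ.filter (fun s : ZMod (2^n) => s = 1 ∨ s = -1 ∨ s = c2+1 ∨ s = c2-1)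
      = ({1, -1, c2+1, c2-1} : Finset (ZMod (2^n))) := by
    ext s
    simp [Finset.mem_filter, Finset.mem_insert]
  rw [hfil]
  rw [Finset.card_insert_of_notMem (by simp [ne12, ne13, ne14]),
    Finset.card_insert_of_notMem (by simp [ne23, ne24]),
    Finset.card_insert_of_notMem (by simp [ne34]),
    Finset.card_singleton]

lemma exists_sqrt (Q' t' : ℤ) (hq : Odd Q') (h8 : Q' % 8 = t' % 8) :
    ∀ n : ℕ, 3 ≤ n → ∃ w : ℤ, Odd w ∧ (2:ℤ)^n ∣ Q' * w^2 - t' := by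
  intro n hn
  induction n, hn using Nat.le_induction with
  | base =>
    refine ⟨1, odd_one, ?_⟩
    have : (8:ℤ) ∣ Q' - t' := by omega
    norm_num
    omega
  | succ n hn ih =>
    obtain ⟨w, hw, c, hc⟩ := ih
    rcases Int.even_or_odd c with ⟨d, hd⟩ | ⟨d, hd⟩
    · exact ⟨w, hw, ⟨d, by rw [hc, hd, pow_succ]; ring⟩⟩
    · obtain ⟨qk, hqk⟩ := hq.mul hw
      have e1 : (2:ℤ)^(n-1) = 2^(n-3)*4 := by
        rw [show n-1 = (n-3)+2 by omega, pow_add]; norm_num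
      have e2 : (2:ℤ)^n = 2^(n-3)*8 := by
        rw [show n = (n-3)+3 by omega, pow_add]; norm_num
      have e3 : (2:ℤ)^(n+1) = 2^(n-3)*16 := by
        rw [show n+1 = (n-3)+4 by omega, pow_add]; norm_num
      have hev : Even ((2:ℤ)^(n-1)) := by
        refine ⟨2^(n-3)*2, by rw [e1]; ring⟩
      refine ⟨w + 2^(n-1), hw.add_even hev, ⟨d + qk + 1 + Q'*2^(n-3), ?_⟩⟩
      rw [e2] at hc
      rw [e1, e3]
      linear_combination hc + 8*(2:ℤ)^(n-3)*hd + 8*(2:ℤ)^(n-3)*hqk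

lemma odd_int_unit {n : ℕ} (c : ℤ) (hc : Odd c) : IsUnit ((c : ℤ) : ZMod (2^n)) := by
  have h1 : Odd c.natAbs := Int.natAbs_odd.mpr hc
  have h2 : Nat.Coprime c.natAbs (2^n) :=
    Nat.Coprime.pow_right n (Nat.coprime_two_right.mpr h1)
  have h3 : IsUnit ((c.natAbs : ℕ) : ZMod (2^n)) := (ZMod.isUnit_iff_coprime _ _).mpr h2
  rcases Int.natAbs_eq c with h | h
  · rw [h, Int.cast_natCast]; exact h3
  · rw [h, Int.cast_neg, Int.cast_natCast]; exact h3.neg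

lemma core_card {n : ℕ} (hn : 3 ≤ n) (Q' t' : ℤ) (hq : Odd Q') (ht : Odd t')
    (h8 : Q' % 8 = t' % 8) :
    Nat.card {w : ZMod (2^n) // (Q' : ZMod (2^n)) * w^2 = (t' : ZMod (2^n))} = 4 := by
  obtain ⟨w0, hw0odd, hdvd⟩ := exists_sqrt Q' t' hq h8 n hn
  set W : ZMod (2^n) := ((w0 : ℤ) : ZMod (2^n)) with hWdef
  have hW : (Q' : ZMod (2^n)) * W^2 = (t' : ZMod (2^n)) := by
    have h0 : ((Q'*w0^2 - t' : ℤ) : ZMod (2^n)) = 0 :=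
      (ZMod.intCast_zmod_eq_zero_iff_dvd _ _).mpr (by push_cast; exact hdvd)
    push_cast at h0
    linear_combination h0
  have hWu : IsUnit W := odd_int_unit w0 hw0odd
  have hQu : IsUnit ((Q' : ℤ) : ZMod (2^n)) := odd_int_unit Q' hq
  set u := hWu.unit with hu
  have huW : (u : ZMod (2^n)) = W := hWu.unit_spec
  have equiv : {s : ZMod (2^n) // s^2 = 1} ≃
      {w : ZMod (2^n) // (Q' : ZMod (2^n)) * w^2 = (t' : ZMod (2^n))} := by
    refine
    { toFun := fun s => ⟨W * s.1, ?_⟩,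
      invFun := fun w => ⟨(↑u⁻¹ : ZMod (2^n)) * w.1, ?_⟩,
      left_inv := ?_, right_inv := ?_ }
    · rw [mul_pow, ← mul_assoc, hW, s.2, mul_one]
    · have hsq : w.1^2 = W^2 := hQu.mul_left_cancel (w.2.trans hW.symm)
      rw [mul_pow, hsq, ← huW, ← mul_pow, Units.inv_mul, one_pow]
    · rintro ⟨s, hs⟩
      apply Subtype.ext
      show (↑u⁻¹ : ZMod (2^n)) * (W * s) = s
      rw [← huW, ← mul_assoc, Units.inv_mul, one_mul]
    · rintro ⟨w, hw⟩
      apply Subtype.ext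
      show W * ((↑u⁻¹ : ZMod (2^n)) * w) = w
      rw [← huW, ← mul_assoc, Units.mul_inv, one_mul]
  rw [← Nat.card_congr equiv]
  exact card_sqrt_one hn

lemma transl (N : ℕ) (C T : ℤ) (xv : ℕ) :
    ((C : ZMod (2^N)) * ((xv : ℕ) : ZMod (2^N))^2 = ((T : ℤ) : ZMod (2^N))) ↔
      (2:ℤ)^N ∣ T - C*(xv:ℤ)^2 := by
  have h1 : (C : ZMod (2^N)) * ((xv : ℕ) : ZMod (2^N))^2
      = ((C*(xv:ℤ)^2 : ℤ) : ZMod (2^N)) := by push_cast; ring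
  rw [h1, ZMod.intCast_eq_intCast_iff_dvd_sub]
  constructor
  · intro h; exact_mod_cast h
  · intro h; exact_mod_cast h

lemma sol_card (k b m : ℕ) (Q Q' : ℤ) (t t' : ℕ)
    (hmb : m ≤ b) (hbk : b < k) (h2m : 2*m ≤ b)
    (hq'odd : Odd Q')
    (hQfact : Q = 2^(b-2*m) * Q')
    (htfact : t = 2^b * t') :
    Nat.card {x : ZMod (2^k) // (Q : ZMod (2^k)) * x^2 = (t : ZMod (2^k))} =
      Nat.card {w : ZMod (2^(k-b)) //
        (Q' : ZMod (2^(k-b))) * w^2 = ((t' : ℤ) : ZMod (2^(k-b)))} * 2^(b-m) := by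
  haveI : NeZero (2^k) := ⟨(Nat.pow_pos (by norm_num)).ne'⟩
  haveI : NeZero (2^(k-m)) := ⟨(Nat.pow_pos (by norm_num)).ne'⟩
  haveI : NeZero (2^(k-b)) := ⟨(Nat.pow_pos (by norm_num)).ne'⟩
  have hkb : k - b ≤ k - m := by omega
  set P : ZMod (2^(k-b)) → Prop :=
    fun w => (Q' : ZMod (2^(k-b))) * w^2 = ((t' : ℤ) : ZMod (2^(k-b))) with hP
  have hT : ((t:ℕ) : ZMod (2^k)) = (((t:ℤ)) : ZMod (2^k)) := by push_cast; rfl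
  have hiff : ∀ zv : ℕ,
      ((Q : ZMod (2^k)) * ((2^m * zv : ℕ) : ZMod (2^k))^2 = ((t:ℕ) : ZMod (2^k)))
      ↔ ((Q' : ZMod (2^(k-b))) * ((zv:ℕ) : ZMod (2^(k-b)))^2
          = ((t':ℤ) : ZMod (2^(k-b)))) := by
    intro zv
    rw [hT, transl k Q (t:ℤ) (2^m*zv), transl (k-b) Q' (t':ℤ) zv]
    have hpw : (2:ℤ)^(b-2*m) * ((2:ℤ)^m)^2 = 2^b := by
      rw [← pow_mul, ← pow_add]; congr 1; omega
    have hfac : (t:ℤ) - Q * ((2^m*zv : ℕ):ℤ)^2 = 2^b * ((t':ℤ) - Q'*(zv:ℤ)^2) := by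
      rw [hQfact]
      push_cast [htfact]
      linear_combination (-(zv:ℤ)^2 * Q') * hpw
    rw [hfac, show (2:ℤ)^k = 2^b * 2^(k-b) from by rw [← pow_add]; congr 1; omega,
      mul_dvd_mul_iff_left (pow_ne_zero _ (two_ne_zero))]
  set f : {z : ZMod (2^(k-m)) //
        P (ZMod.castHom (pow_dvd_pow 2 hkb) (ZMod (2^(k-b))) z)} →
      {x : ZMod (2^k) // (Q : ZMod (2^k)) * x^2 = (t : ZMod (2^k))} :=
    fun z => ⟨((2^m * z.1.val : ℕ) : ZMod (2^k)), by
      have hc := z.2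
      rw [castHom_eq hkb] at hc
      exact (hiff z.1.val).mpr hc⟩ with hf
  have hbij : Function.Bijective f := by
    constructor
    · intro z1 z2 h
      have h' := Subtype.ext_iff.mp h
      rw [hf] at h'
      have hmod := (ZMod.natCast_eq_natCast_iff _ _ _).mp h'
      rw [show (2:ℕ)^k = 2^m * 2^(k-m) from by rw [← pow_add]; congr 1; omega] at hmod
      have h2 := Nat.ModEq.mul_left_cancel'
        (show (2:ℕ)^m ≠ 0 from pow_ne_zero _ two_ne_zero) hmod
      have h3 := (ZMod.natCast_eq_natCast_iff _ _ _).mpr h2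
      rw [ZMod.natCast_rightInverse z1.1, ZMod.natCast_rightInverse z2.1] at h3
      exact Subtype.ext h3
    · rintro ⟨x, hx⟩
      have hxv : ((x.val : ℕ) : ZMod (2^k)) = x := ZMod.natCast_rightInverse x
      have hdvdk : (2:ℤ)^k ∣ (t:ℤ) - Q * (x.val:ℤ)^2 := by
        apply (transl k Q (t:ℤ) x.val).mp
        rw [← hT, hxv]
        exact hx
      have hb2 : (2:ℤ)^b ∣ (t:ℤ) := ⟨(t':ℤ), by exact_mod_cast htfact⟩
      have hb1 : (2:ℤ)^b ∣ (t:ℤ) - Q*(x.val:ℤ)^2 :=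
        dvd_trans (pow_dvd_pow 2 hbk.le) hdvdk
      have hb3 : (2:ℤ)^b ∣ Q*(x.val:ℤ)^2 := by
        have := dvd_sub hb2 hb1
        simpa using this
      have hb4 : (2:ℤ)^(2*m) ∣ Q'*(x.val:ℤ)^2 := by
        rw [hQfact, show (2:ℤ)^(b-2*m) * Q' * (x.val:ℤ)^2
            = 2^(b-2*m) * (Q' * (x.val:ℤ)^2) from by ring,
          show (2:ℤ)^b = 2^(b-2*m) * 2^(2*m) from by rw [← pow_add]; congr 1; omega]
          at hb3
        exact (mul_dvd_mul_iff_left (pow_ne_zero _ (two_ne_zero))).mp hb3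
      have hq2 : ¬ (2:ℤ) ∣ Q' := by
        intro hdv
        obtain ⟨c, hc⟩ := hdv
        obtain ⟨d, hd⟩ := hq'odd
        omega
      have hb5 : (2:ℤ)^(2*m) ∣ ((x.val:ℤ))^2 :=
        Int.prime_two.pow_dvd_of_dvd_mul_left _ hq2 hb4
      have hb6 : (2:ℤ)^m ∣ (x.val:ℤ) := by
        rw [show (2:ℤ)^(2*m) = ((2:ℤ)^m)^2 from by rw [mul_comm, pow_mul]] at hb5
        exact (Int.pow_dvd_pow_iff two_ne_zero).mp hb5
      have hb7 : (2:ℕ)^m ∣ x.val := by exact_mod_cast hb6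
      obtain ⟨zv, hzv⟩ := hb7
      have heq : ((2^m * (zv % 2^(k-m)) : ℕ) : ZMod (2^k)) = x := by
        rw [← hxv]
        apply (ZMod.natCast_eq_natCast_iff _ _ _).mpr
        rw [hzv, show (2:ℕ)^k = 2^m * 2^(k-m) from by rw [← pow_add]; congr 1; omega]
        exact Nat.ModEq.mul_left' _ (Nat.mod_modEq zv _)
      have hPz : P (ZMod.castHom (pow_dvd_pow 2 hkb) (ZMod (2^(k-b)))
          ((zv : ℕ) : ZMod (2^(k-m)))) := by
        rw [castHom_eq hkb, ZMod.val_natCast]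
        exact (hiff (zv % 2^(k-m))).mp (by rw [heq]; exact hx)
      refine ⟨⟨((zv : ℕ) : ZMod (2^(k-m))), hPz⟩, ?_⟩
      apply Subtype.ext
      show ((2^m * ((zv : ZMod (2^(k-m))).val) : ℕ) : ZMod (2^k)) = x
      rw [ZMod.val_natCast]
      exact heq
  rw [Nat.card_congr (Equiv.ofBijective f hbij).symm, pow2_fiber_card hkb P,
    show k - m - (k - b) = b - m from by omega]

/-- under the solvability conditions with k − ord_2(t) ≥ 3,
Q·x² ≡ t (mod 2^k) has exactly 4·2^((ord_2(t)+ord_2(Q))/2) solutions. -/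
theorem one_dim_count_two (k : ℕ) (hk : 0 < k) (Q : ℤ) (hQ : Q ≠ 0)
    (t : ℕ) (ht : 0 < t) (htk : t < 2 ^ k) (hvt : padicValNat 2 t < k)
    (hbig : 3 ≤ k - padicValNat 2 t)
    (hle : padicValInt 2 Q ≤ padicValNat 2 t)
    (heven : Even (padicValNat 2 t - padicValInt 2 Q))
    (hcop : (Q / 2 ^ padicValInt 2 Q) % 8 =
      ((t / 2 ^ padicValNat 2 t : ℕ) : ℤ) % 8) :
    Nat.card {x : ZMod (2 ^ k) // (Q : ZMod (2 ^ k)) * x ^ 2 = (t : ZMod (2 ^ k))} =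
      4 * 2 ^ ((padicValNat 2 t + padicValInt 2 Q) / 2) := by
  haveI : Fact (Nat.Prime 2) := ⟨Nat.prime_two⟩
  set a := padicValInt 2 Q with ha
  set b := padicValNat 2 t with hb
  set m := (b - a) / 2 with hm
  have haQ : a = padicValNat 2 Q.natAbs := rfl
  have h2m : 2 * m = b - a := by
    obtain ⟨j, hj⟩ := heven
    omega
  -- factor Q
  have hQdvdN : (2:ℕ)^a ∣ Q.natAbs := by
    rw [haQ]; exact pow_padicValNat_dvd
  have hQdvd : (2^a : ℤ) ∣ Q := Int.dvd_natAbs.mp (by exact_mod_cast hQdvdN)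
  set Q' := Q / 2^a with hQ'
  have hQfact : Q = 2^a * Q' := (Int.mul_ediv_cancel' hQdvd).symm
  have hQ'odd : Odd Q' := by
    rcases Int.even_or_odd Q' with ⟨c, hc⟩ | h
    · exfalso
      have hdvd2 : (2:ℕ)^(a+1) ∣ Q.natAbs := by
        have h1 : ((2:ℤ)^(a+1)) ∣ Q := ⟨c, by rw [hQfact, hc, pow_succ]; ring⟩
        have h2 := Int.natAbs_dvd_natAbs.mpr h1
        simpa [Int.natAbs_pow] using h2
      rw [haQ] at hdvd2
      exact pow_succ_padicValNat_not_dvd (p := 2) (Int.natAbs_ne_zero.mpr hQ) hdvd2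
    · exact h
  -- factor t
  have htdvd : (2:ℕ)^b ∣ t := by rw [hb]; exact pow_padicValNat_dvd
  set t' := t / 2^b with ht'
  have htfact : t = 2^b * t' := (Nat.mul_div_cancel' htdvd).symm
  have ht'odd : Odd t' := by
    rcases Nat.even_or_odd t' with ⟨c, hc⟩ | h
    · exfalso
      have hdvd2 : (2:ℕ)^(b+1) ∣ t := ⟨c, by rw [htfact, hc, pow_succ]; ring⟩
      rw [hb] at hdvd2
      exact pow_succ_padicValNat_not_dvd (p := 2) ht.ne' hdvd2
    · exact h
  have ht'oddZ : Odd (t' : ℤ) := by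
    obtain ⟨c, hc⟩ := ht'odd
    exact ⟨(c:ℤ), by exact_mod_cast hc⟩
  have hcount := sol_card k b m Q Q' t t' (by omega) hvt (by omega) hQ'odd
    (by rw [show b - 2*m = a from by omega]; exact hQfact) htfact
  have hcore := core_card (n := k - b) hbig Q' (t' : ℤ) hQ'odd ht'oddZ hcop
  rw [hcount, hcore, show b - m = (b + a) / 2 from by omega]
end

section
/- Let a, b, c be integers with b odd, let k ≥ 1 and t an integer. Suppose (a₁, a₂) ∈ {0,1}² with a₁ and a₂ not both even satisfies a·a₁² + b·a₁·a₂ + c·a₂² ≡ t (mod 2). Then the number of pairs (x₁, x₂) ∈ (Z/2^kZ)² with a·x₁² + b·x₁·x₂ + c·x₂² ≡ t (mod 2^k), x₁ ≡ a₁ (mod 2), and x₂ ≡ a₂ (mod 2) is exactly 2^{k−1}. -/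
private lemma two_pow_succ (k : ℕ) (hk : 0 < k) : 2 * 2^(k-1) = 2^k := by
  conv_rhs => rw [show k = (k-1)+1 by omega]
  rw [pow_succ]
  ring

private lemma rval_cast (r : ZMod 2) : ((r.val : ℕ) : ZMod 2) = r := by
  rw [ZMod.natCast_val, ZMod.cast_id]

private lemma fiber_card (k : ℕ) (hk : 0 < k) (r : ZMod 2) :
    Nat.card {x : ZMod (2^k) // ZMod.castHom (dvd_pow_self 2 hk.ne') (ZMod 2) x = r}
      = 2^(k-1) := by
  haveI : NeZero (2^k) := ⟨by positivity⟩
  have hpow := two_pow_succ k hk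
  have hlt : ∀ i : Fin (2^(k-1)), 2 * (i : ℕ) + r.val < 2^k := by
    intro i
    have h1 : (i : ℕ) < 2^(k-1) := i.isLt
    have h2 : r.val < 2 := r.val_lt
    omega
  set f : Fin (2^(k-1)) → {x : ZMod (2^k) // ZMod.castHom (dvd_pow_self 2 hk.ne') (ZMod 2) x = r} :=
    fun i => ⟨((2 * (i : ℕ) + r.val : ℕ) : ZMod (2^k)), by
      rw [map_natCast]
      push_cast
      rw [rval_cast, show (2:ZMod 2) = 0 by decide, zero_mul, zero_add]⟩ with hf
  have hbij : Function.Bijective f := by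
    constructor
    · intro i j hij
      have h1 : ((2 * (i : ℕ) + r.val : ℕ) : ZMod (2^k)) = ((2 * (j : ℕ) + r.val : ℕ) : ZMod (2^k)) :=
        congrArg Subtype.val hij
      have h2 := congrArg ZMod.val h1
      rw [ZMod.val_cast_of_lt (hlt i), ZMod.val_cast_of_lt (hlt j)] at h2
      exact Fin.ext (by omega)
    · rintro ⟨x, hx⟩
      rw [ZMod.castHom_apply, ← ZMod.natCast_val] at hx
      have hx2 : x.val % 2 = r.val := by
        have := congrArg ZMod.val hx
        rwa [ZMod.val_natCast] at this
      have hxlt : x.val < 2^k := x.val_lt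
      refine ⟨⟨x.val / 2, by omega⟩, ?_⟩
      apply Subtype.ext
      show ((2 * (x.val / 2) + r.val : ℕ) : ZMod (2^k)) = x
      have : 2 * (x.val / 2) + r.val = x.val := by omega
      rw [this, ZMod.natCast_val, ZMod.cast_id]
  rw [← Nat.card_eq_of_bijective f hbij, Nat.card_eq_fintype_card, Fintype.card_fin]

private lemma odd_isUnit {k : ℕ} (hk : 0 < k) (w : ZMod (2^k))
    (hw : ZMod.castHom (dvd_pow_self 2 hk.ne') (ZMod 2) w = 1) : IsUnit w := by
  haveI : NeZero (2^k) := ⟨by positivity⟩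
  rw [ZMod.castHom_apply, ← ZMod.natCast_val] at hw
  have h2 : w.val % 2 = 1 := by
    have := congrArg ZMod.val hw
    rwa [ZMod.val_natCast, show (1 : ZMod 2).val = 1 by decide] at this
  have hco : Nat.Coprime w.val (2^k) :=
    Nat.Coprime.pow_right k (Nat.coprime_two_right.mpr (Nat.odd_iff.mpr h2))
  rw [show w = ((w.val : ℕ) : ZMod (2^k)) by rw [ZMod.natCast_val, ZMod.cast_id]]
  exact (ZMod.isUnit_iff_coprime w.val (2^k)).mpr hco

private lemma odd_cast_one (b : ℤ) (hb : Odd b) : (b : ZMod 2) = 1 := by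
  obtain ⟨m, rfl⟩ := hb
  push_cast
  rw [show (2 : ZMod 2) = 0 by decide]
  ring

private lemma key_exists_unique (a b c t : ℤ) (hb : Odd b) (k : ℕ) (hk : 0 < k)
    (α : ℤ) (hq : ((a + b*α + c*α^2 : ℤ) : ZMod 2) = (t : ZMod 2))
    (x₁ : ZMod (2^k)) (hx₁ : ZMod.castHom (dvd_pow_self 2 hk.ne') (ZMod 2) x₁ = 1) :
    ∃! x₂ : ZMod (2^k),
      ((a : ZMod (2^k)) * x₁^2 + (b : ZMod (2^k)) * x₁ * x₂ + (c : ZMod (2^k)) * x₂^2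
          = (t : ZMod (2^k))) ∧
      ZMod.castHom (dvd_pow_self 2 hk.ne') (ZMod 2) x₂ = (α : ZMod 2) := by
  set π := ZMod.castHom (dvd_pow_self 2 hk.ne') (ZMod 2) with hπ
  -- injectivity core
  have core : ∀ y z : ZMod (2^k), π y = (α : ZMod 2) → π z = (α : ZMod 2) →
      (c : ZMod (2^k)) * y^2 + (b : ZMod (2^k)) * x₁ * y
        = (c : ZMod (2^k)) * z^2 + (b : ZMod (2^k)) * x₁ * z → y = z := by
    intro y z hy hz hyz
    have hfac : (y - z) * ((c : ZMod (2^k)) * (y + z) + (b : ZMod (2^k)) * x₁) = 0 := by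
      linear_combination hyz
    have hu : IsUnit ((c : ZMod (2^k)) * (y + z) + (b : ZMod (2^k)) * x₁) := by
      apply odd_isUnit hk
      have : π ((c : ZMod (2^k)) * (y + z) + (b : ZMod (2^k)) * x₁)
          = (c : ZMod 2) * (π y + π z) + (b : ZMod 2) * π x₁ := by
        push_cast [hπ]
        simp [map_add, map_mul, map_intCast]
      rw [this, hy, hz, hx₁, odd_cast_one b hb]
      have hself : (α : ZMod 2) + (α : ZMod 2) = 0 := by
        have : ((2*α : ℤ) : ZMod 2) = 0 := by
          rw [ZMod.intCast_zmod_eq_zero_iff_dvd]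
          exact ⟨α, rfl⟩
        push_cast at this
        linear_combination this
      rw [hself, mul_zero, zero_add, mul_one]
    have := (IsUnit.mul_left_eq_zero hu).mp hfac
    linear_combination this
  -- the map on fibers
  set β : ZMod 2 := (c : ZMod 2) * (α : ZMod 2)^2 + (b : ZMod 2) * (α : ZMod 2) with hβ
  set F : {x : ZMod (2^k) // π x = (α : ZMod 2)} → {w : ZMod (2^k) // π w = β} :=
    fun x => ⟨(c : ZMod (2^k)) * (x : ZMod (2^k))^2 + (b : ZMod (2^k)) * x₁ * x, by
      have : π ((c : ZMod (2^k)) * (x : ZMod (2^k))^2 + (b : ZMod (2^k)) * x₁ * (x : ZMod (2^k)))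
          = (c : ZMod 2) * (π x)^2 + (b : ZMod 2) * π x₁ * π x := by
        simp [map_add, map_mul, map_pow, map_intCast]
      rw [this, x.prop, hx₁, hβ, mul_one]⟩ with hF
  have hFinj : Function.Injective F := by
    rintro ⟨y, hy⟩ ⟨z, hz⟩ hFyz
    have : (c : ZMod (2^k)) * y^2 + (b : ZMod (2^k)) * x₁ * y
        = (c : ZMod (2^k)) * z^2 + (b : ZMod (2^k)) * x₁ * z := congrArg Subtype.val hFyz
    exact Subtype.ext (core y z hy hz this)
  have hFbij : Function.Bijective F := by
    rw [Nat.bijective_iff_injective_and_card]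
    exact ⟨hFinj, by rw [hπ, fiber_card k hk, fiber_card k hk]⟩
  -- target element
  have hw : π ((t : ZMod (2^k)) - (a : ZMod (2^k)) * x₁^2) = β := by
    have : π ((t : ZMod (2^k)) - (a : ZMod (2^k)) * x₁^2)
        = (t : ZMod 2) - (a : ZMod 2) * (π x₁)^2 := by
      simp [map_sub, map_mul, map_pow, map_intCast]
    rw [this, hx₁, ← hq, hβ]
    push_cast
    ring
  obtain ⟨⟨x₂, hx₂⟩, hFx₂⟩ := hFbij.surjective ⟨_, hw⟩
  have hx₂eq : (c : ZMod (2^k)) * x₂^2 + (b : ZMod (2^k)) * x₁ * x₂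
      = (t : ZMod (2^k)) - (a : ZMod (2^k)) * x₁^2 := congrArg Subtype.val hFx₂
  refine ⟨x₂, ⟨by linear_combination hx₂eq, hx₂⟩, ?_⟩
  rintro y ⟨hyeq, hy⟩
  exact core y x₂ hy hx₂ (by linear_combination hyeq - hx₂eq)

private lemma count_aux (a b c t : ℤ) (hb : Odd b) (k : ℕ) (hk : 0 < k) (γ α : ℤ)
    (hγ : (γ : ZMod 2) = 1)
    (hq : ((a + b*α + c*α^2 : ℤ) : ZMod 2) = (t : ZMod 2)) :
    Nat.card {x : ZMod (2 ^ k) × ZMod (2 ^ k) //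
        (a : ZMod (2 ^ k)) * x.1 ^ 2 + (b : ZMod (2 ^ k)) * x.1 * x.2 +
            (c : ZMod (2 ^ k)) * x.2 ^ 2 = (t : ZMod (2 ^ k)) ∧
          ZMod.castHom (dvd_pow_self 2 hk.ne') (ZMod 2) x.1 = (γ : ZMod 2) ∧
          ZMod.castHom (dvd_pow_self 2 hk.ne') (ZMod 2) x.2 = (α : ZMod 2)} = 2^(k-1) := by
  set π := ZMod.castHom (dvd_pow_self 2 hk.ne') (ZMod 2) with hπ
  set p : {x : ZMod (2 ^ k) × ZMod (2 ^ k) //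
        (a : ZMod (2 ^ k)) * x.1 ^ 2 + (b : ZMod (2 ^ k)) * x.1 * x.2 +
            (c : ZMod (2 ^ k)) * x.2 ^ 2 = (t : ZMod (2 ^ k)) ∧
          π x.1 = (γ : ZMod 2) ∧ π x.2 = (α : ZMod 2)}
      → {y : ZMod (2^k) // π y = (γ : ZMod 2)} :=
    fun x => ⟨x.val.1, x.prop.2.1⟩ with hp
  have hbij : Function.Bijective p := by
    constructor
    · rintro ⟨⟨x₁, x₂⟩, hx⟩ ⟨⟨y₁, y₂⟩, hy⟩ hxy
      have h1 : x₁ = y₁ := congrArg Subtype.val hxy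
      subst h1
      have hkey := key_exists_unique a b c t hb k hk α hq x₁ (hγ ▸ hx.2.1)
      have := hkey.unique ⟨hx.1, hx.2.2⟩ ⟨hy.1, hy.2.2⟩
      exact Subtype.ext (Prod.ext rfl this)
    · rintro ⟨y, hy⟩
      obtain ⟨x₂, ⟨heq, hx₂⟩, -⟩ := key_exists_unique a b c t hb k hk α hq y (hγ ▸ hy)
      exact ⟨⟨(y, x₂), heq, hy, hx₂⟩, rfl⟩
  rw [Nat.card_eq_of_bijective p hbij, hπ, fiber_card k hk]

theorem typeII_star_count_fixed_parity' (a b c t : ℤ) (hb : Odd b) (k : ℕ)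
    (hk : 0 < k) (a₁ a₂ : ℤ) (h1 : a₁ = 0 ∨ a₁ = 1) (h2 : a₂ = 0 ∨ a₂ = 1)
    (hne : ¬ (Even a₁ ∧ Even a₂))
    (hrep : (a * a₁ ^ 2 + b * a₁ * a₂ + c * a₂ ^ 2) % 2 = t % 2) :
    Nat.card {x : ZMod (2 ^ k) × ZMod (2 ^ k) //
        (a : ZMod (2 ^ k)) * x.1 ^ 2 + (b : ZMod (2 ^ k)) * x.1 * x.2 +
            (c : ZMod (2 ^ k)) * x.2 ^ 2 = (t : ZMod (2 ^ k)) ∧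
          ZMod.castHom (dvd_pow_self 2 hk.ne') (ZMod 2) x.1 = (a₁ : ZMod 2) ∧
          ZMod.castHom (dvd_pow_self 2 hk.ne') (ZMod 2) x.2 = (a₂ : ZMod 2)} =
      2 ^ (k - 1) := by
  have hcast : ((a * a₁ ^ 2 + b * a₁ * a₂ + c * a₂ ^ 2 : ℤ) : ZMod 2) = (t : ZMod 2) :=
    (ZMod.intCast_eq_intCast_iff _ _ _).mpr hrep
  rcases h1 with rfl | rfl
  · -- a₁ = 0, so a₂ = 1
    have ha₂ : a₂ = 1 := by
      rcases h2 with rfl | rfl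
      · exact absurd ⟨Even.zero, Even.zero⟩ hne
      · rfl
    subst ha₂
    have e : {x : ZMod (2 ^ k) × ZMod (2 ^ k) //
        (a : ZMod (2 ^ k)) * x.1 ^ 2 + (b : ZMod (2 ^ k)) * x.1 * x.2 +
            (c : ZMod (2 ^ k)) * x.2 ^ 2 = (t : ZMod (2 ^ k)) ∧
          ZMod.castHom (dvd_pow_self 2 hk.ne') (ZMod 2) x.1 = ((0 : ℤ) : ZMod 2) ∧
          ZMod.castHom (dvd_pow_self 2 hk.ne') (ZMod 2) x.2 = ((1 : ℤ) : ZMod 2)}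
        ≃ {x : ZMod (2 ^ k) × ZMod (2 ^ k) //
        (c : ZMod (2 ^ k)) * x.1 ^ 2 + (b : ZMod (2 ^ k)) * x.1 * x.2 +
            (a : ZMod (2 ^ k)) * x.2 ^ 2 = (t : ZMod (2 ^ k)) ∧
          ZMod.castHom (dvd_pow_self 2 hk.ne') (ZMod 2) x.1 = ((1 : ℤ) : ZMod 2) ∧
          ZMod.castHom (dvd_pow_self 2 hk.ne') (ZMod 2) x.2 = ((0 : ℤ) : ZMod 2)} := by
      refine Equiv.subtypeEquiv (Equiv.prodComm _ _) (fun x => ?_)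
      simp only [Equiv.prodComm_apply, Prod.fst_swap, Prod.snd_swap]
      constructor
      · rintro ⟨hq1, hq2, hq3⟩; exact ⟨by linear_combination hq1, hq3, hq2⟩
      · rintro ⟨hq1, hq2, hq3⟩; exact ⟨by linear_combination hq1, hq3, hq2⟩
    rw [Nat.card_congr e]
    refine count_aux c b a t hb k hk 1 0 (by norm_num) ?_
    push_cast at hcast ⊢
    linear_combination hcast
  · -- a₁ = 1
    refine count_aux a b c t hb k hk 1 a₂ (by norm_num) ?_
    push_cast at hcast ⊢
    linear_combination hcast


/-- for a type II* form with b odd, each solution pattern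
(a₁,a₂) mod 2 (not both even) extends to exactly 2^(k−1) solutions mod 2^k. -/
theorem typeII_star_count_fixed_parity (a b c t : ℤ) (hb : Odd b) (k : ℕ)
    (hk : 0 < k) (a₁ a₂ : ℤ) (h1 : a₁ = 0 ∨ a₁ = 1) (h2 : a₂ = 0 ∨ a₂ = 1)
    (hne : ¬ (Even a₁ ∧ Even a₂))
    (hrep : (a * a₁ ^ 2 + b * a₁ * a₂ + c * a₂ ^ 2) % 2 = t % 2) :
    Nat.card {x : ZMod (2 ^ k) × ZMod (2 ^ k) //
        (a : ZMod (2 ^ k)) * x.1 ^ 2 + (b : ZMod (2 ^ k)) * x.1 * x.2 +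
            (c : ZMod (2 ^ k)) * x.2 ^ 2 = (t : ZMod (2 ^ k)) ∧
          ZMod.castHom (dvd_pow_self 2 hk.ne') (ZMod 2) x.1 = (a₁ : ZMod 2) ∧
          ZMod.castHom (dvd_pow_self 2 hk.ne') (ZMod 2) x.2 = (a₂ : ZMod 2)} =
      2 ^ (k - 1) :=
  typeII_star_count_fixed_parity' a b c t hb k hk a₁ a₂ h1 h2 hne hrep
end

section
/- Let a, b, c be integers with b odd, and let i ≥ 1. If (y₁, y₂) is a solution of a y₁² + b y₁ y₂ + c y₂² ≡ t (mod 2^i) with at least one of y₁, y₂ odd, then there exist exactly two pairs (z₁, z₂) in (Z/2^{i+1}Z)² with z₁ ≡ y₁ (mod 2^i), z₂ ≡ y₂ (mod 2^i), and a z₁² + b z₁ z₂ + c z₂² ≡ t (mod 2^{i+1}). -/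
theorem aux_lift_s13 (a b c t : ℤ) (hb : Odd b) (i : ℕ) (hi : 1 ≤ i)
    (y₁ y₂ : ℤ) (h1 : Odd y₁)
    (hrep : (a * y₁ ^ 2 + b * y₁ * y₂ + c * y₂ ^ 2) % (2 ^ i : ℤ) = t % (2 ^ i : ℤ)) :
    Nat.card {z : ZMod (2 ^ (i + 1)) × ZMod (2 ^ (i + 1)) //
        ZMod.castHom (pow_dvd_pow 2 (Nat.le_succ i)) (ZMod (2 ^ i)) z.1 =
            (y₁ : ZMod (2 ^ i)) ∧
          ZMod.castHom (pow_dvd_pow 2 (Nat.le_succ i)) (ZMod (2 ^ i)) z.2 =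
            (y₂ : ZMod (2 ^ i)) ∧
          (a : ZMod (2 ^ (i + 1))) * z.1 ^ 2 + (b : ZMod (2 ^ (i + 1))) * z.1 * z.2 +
            (c : ZMod (2 ^ (i + 1))) * z.2 ^ 2 = (t : ZMod (2 ^ (i + 1)))} = 2 := by
  haveI : NeZero (2 ^ (i + 1)) := ⟨by positivity⟩
  have hdvd : (2 ^ i : ℤ) ∣ (a * y₁ ^ 2 + b * y₁ * y₂ + c * y₂ ^ 2) - t :=
    Int.ModEq.dvd (Int.ModEq.symm hrep)
  obtain ⟨k, hk⟩ := hdvd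
  have hcastpow : (((2 ^ (i+1) : ℕ) : ℤ)) = (2:ℤ) ^ (i+1) := by push_cast; ring
  have hMzero : ((2 : ZMod (2 ^ i)) ^ i) = 0 := by
    have := ZMod.natCast_self (2 ^ i)
    push_cast at this
    exact this
  have C1 : ∀ (y e : ℤ), ZMod.castHom (pow_dvd_pow 2 (Nat.le_succ i)) (ZMod (2 ^ i))
      ((y + 2 ^ i * e : ℤ) : ZMod (2 ^ (i + 1))) = (y : ZMod (2 ^ i)) := by
    intro y e
    rw [map_intCast]
    push_cast
    rw [hMzero, zero_mul, add_zero]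
  -- kernel lemma
  have L1 : ∀ (y : ℤ) (u : ZMod (2 ^ (i + 1))),
      ZMod.castHom (pow_dvd_pow 2 (Nat.le_succ i)) (ZMod (2 ^ i)) u = (y : ZMod (2 ^ i)) →
      u = ((y + 2 ^ i * 0 : ℤ) : ZMod (2 ^ (i + 1))) ∨
      u = ((y + 2 ^ i * 1 : ℤ) : ZMod (2 ^ (i + 1))) := by
    intro y u hu
    have hval : u = ((u.val : ℤ) : ZMod (2 ^ (i + 1))) := by
      push_cast
      simp [ZMod.natCast_val, ZMod.cast_id]
    set v : ℤ := (u.val : ℤ) with hv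
    have h0 : ZMod.castHom (pow_dvd_pow 2 (Nat.le_succ i)) (ZMod (2 ^ i)) ((v : ZMod (2 ^ (i+1)))) = (y : ZMod (2 ^ i)) := by
      rw [← hval]; exact hu
    rw [map_intCast, ZMod.intCast_eq_intCast_iff, Int.modEq_iff_dvd] at h0
    rw [show (((2 ^ i : ℕ) : ℤ)) = (2:ℤ) ^ i by push_cast; ring] at h0
    obtain ⟨q, hq⟩ := h0
    have hcast : ∀ e : ℤ, (u = ((y + 2 ^ i * e : ℤ) : ZMod (2 ^ (i + 1))) ↔
        ((2:ℤ) ^ (i+1)) ∣ ((y + 2 ^ i * e) - v)) := by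
      intro e
      rw [hval, ZMod.intCast_eq_intCast_iff, Int.modEq_iff_dvd, hcastpow]
    rcases Int.even_or_odd q with ⟨m, hm⟩ | ⟨m, hm⟩
    · left
      rw [hcast]
      refine ⟨m, ?_⟩
      have : y - v = 2 ^ i * q := hq
      rw [pow_succ]
      linear_combination this + 2^i * hm
    · right
      rw [hcast]
      refine ⟨m + 1, ?_⟩
      rw [pow_succ]
      linear_combination hq + 2^i * hm
  -- the key condition
  obtain ⟨m0, rfl⟩ : ∃ m0, i = m0 + 1 := ⟨i - 1, by omega⟩
  have cond : ∀ e₁ e₂ : ℤ,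
      ((a * (y₁ + 2^(m0+1)*e₁) ^ 2 + b * (y₁ + 2^(m0+1)*e₁) * (y₂ + 2^(m0+1)*e₂)
        + c * (y₂ + 2^(m0+1)*e₂) ^ 2 : ℤ) : ZMod (2 ^ (m0 + 1 + 1)))
        = (t : ZMod (2 ^ (m0 + 1 + 1))) ↔
      (2:ℤ) ∣ (e₁ * y₂ + e₂ * y₁ + k) := by
    intro e₁ e₂
    rw [ZMod.intCast_eq_intCast_iff, Int.modEq_iff_dvd, hcastpow]
    have key : t - (a * (y₁ + 2^(m0+1)*e₁) ^ 2 + b * (y₁ + 2^(m0+1)*e₁) * (y₂ + 2^(m0+1)*e₂)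
        + c * (y₂ + 2^(m0+1)*e₂) ^ 2)
        = 2^(m0+1) * (-(k + b * (e₁ * y₂ + e₂ * y₁)))
          + 2^(m0+1+1) * (-(a*y₁*e₁ + c*y₂*e₂ + 2^m0*(a*e₁^2 + b*e₁*e₂ + c*e₂^2))) := by
      linear_combination (-1 : ℤ) * hk
    rw [key]
    rw [dvd_add_left (Dvd.intro _ rfl)]
    rw [show ((2:ℤ)^(m0+1+1)) = 2^(m0+1) * 2 by ring]
    rw [mul_dvd_mul_iff_left (pow_ne_zero _ (two_ne_zero))]
    obtain ⟨n, hn⟩ := hb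
    constructor
    · rintro ⟨s, hs⟩
      exact ⟨-s - n * (e₁ * y₂ + e₂ * y₁), by linear_combination -hs - (e₁*y₂+e₂*y₁) * hn⟩
    · rintro ⟨s, hs⟩
      exact ⟨-s - n * (e₁ * y₂ + e₂ * y₁), by linear_combination -hs - (e₁*y₂+e₂*y₁) * hn⟩
  -- now count
  obtain ⟨mm, hmm⟩ := h1
  rw [Nat.card_eq_two_iff]
  have memx : (2:ℤ) ∣ (0 * y₂ + (k % 2) * y₁ + k) := by
    have h2 : (2:ℤ) ∣ (k % 2 + k) := by omega
    obtain ⟨s, hs⟩ := h2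
    refine ⟨(k % 2) * mm + s, ?_⟩
    rw [hmm]; linear_combination hs
  have memy : (2:ℤ) ∣ (1 * y₂ + ((k + y₂) % 2) * y₁ + k) := by
    have h2 : (2:ℤ) ∣ ((k + y₂) % 2 + (k + y₂)) := by omega
    obtain ⟨s, hs⟩ := h2
    refine ⟨((k + y₂) % 2) * mm + s, ?_⟩
    rw [hmm]; linear_combination hs
  refine ⟨⟨(((y₁ + 2^(m0+1)*0 : ℤ) : ZMod (2 ^ (m0+1+1))),
            ((y₂ + 2^(m0+1)*(k % 2) : ℤ) : ZMod (2 ^ (m0+1+1)))),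
          C1 _ _, C1 _ _, ?_⟩,
         ⟨(((y₁ + 2^(m0+1)*1 : ℤ) : ZMod (2 ^ (m0+1+1))),
            ((y₂ + 2^(m0+1)*((k + y₂) % 2) : ℤ) : ZMod (2 ^ (m0+1+1)))),
          C1 _ _, C1 _ _, ?_⟩, ?_, ?_⟩
  · have h := (cond 0 (k % 2)).mpr memx
    push_cast at h ⊢
    linear_combination h
  · have h := (cond 1 ((k + y₂) % 2)).mpr memy
    push_cast at h ⊢
    linear_combination h
  · -- distinct
    intro hxy
    have h1' : ((y₁ + 2^(m0+1)*0 : ℤ) : ZMod (2 ^ (m0+1+1)))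
        = ((y₁ + 2^(m0+1)*1 : ℤ) : ZMod (2 ^ (m0+1+1))) := by
      have := congrArg (fun w => (w : {z : ZMod (2 ^ (m0+1+1)) × ZMod (2 ^ (m0+1+1)) // _}).1.1) hxy
      exact this
    rw [ZMod.intCast_eq_intCast_iff, Int.modEq_iff_dvd, hcastpow] at h1'
    rw [show (y₁ + 2^(m0+1)*1) - (y₁ + 2^(m0+1)*0) = (2:ℤ)^(m0+1) by ring] at h1'
    have hle := Int.le_of_dvd (by positivity) h1'
    have : (2:ℤ)^(m0+1) < 2^(m0+1+1) := by
      have hp : (0:ℤ) < 2^(m0+1) := by positivity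
      have hq : (2:ℤ)^(m0+1+1) = 2^(m0+1)*2 := pow_succ 2 (m0+1)
      linarith
    linarith
  · -- completeness
    apply Set.eq_univ_of_forall
    rintro ⟨⟨z₁, z₂⟩, hz1, hz2, hz3⟩
    simp only [Set.mem_insert_iff, Set.mem_singleton_iff, Subtype.ext_iff, Prod.ext_iff]
    rcases L1 y₁ z₁ hz1 with h | h <;> rcases L1 y₂ z₂ hz2 with h' | h' <;>
      rw [h, h'] at hz3
    · have hc := (cond 0 0).mp (by push_cast at hz3 ⊢; linear_combination hz3)
      obtain ⟨s, hs⟩ := hc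
      have hk2 : k % 2 = 0 := by omega
      exact Or.inl ⟨h, by rw [h', hk2]⟩
    · have hc := (cond 0 1).mp (by push_cast at hz3 ⊢; linear_combination hz3)
      obtain ⟨s, hs⟩ := hc
      have hk2 : k % 2 = 1 := by rw [hmm] at hs; omega
      exact Or.inl ⟨h, by rw [h', hk2]⟩
    · have hc := (cond 1 0).mp (by push_cast at hz3 ⊢; linear_combination hz3)
      obtain ⟨s, hs⟩ := hc
      have hk2 : (k + y₂) % 2 = 0 := by omega
      exact Or.inr ⟨h, by rw [h', hk2]⟩
    · have hc := (cond 1 1).mp (by push_cast at hz3 ⊢; linear_combination hz3)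
      obtain ⟨s, hs⟩ := hc
      have hk2 : (k + y₂) % 2 = 1 := by rw [hmm] at hs; omega
      exact Or.inr ⟨h, by rw [h', hk2]⟩

/-- a solution mod 2^i of a type II* form with some yⱼ odd lifts
to exactly two solutions mod 2^(i+1). -/
theorem typeII_star_lift_two (a b c t : ℤ) (hb : Odd b) (i : ℕ) (hi : 1 ≤ i)
    (y₁ y₂ : ℤ) (hodd : Odd y₁ ∨ Odd y₂)
    (hrep : (a * y₁ ^ 2 + b * y₁ * y₂ + c * y₂ ^ 2) % (2 ^ i : ℤ) = t % (2 ^ i : ℤ)) :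
    Nat.card {z : ZMod (2 ^ (i + 1)) × ZMod (2 ^ (i + 1)) //
        ZMod.castHom (pow_dvd_pow 2 (Nat.le_succ i)) (ZMod (2 ^ i)) z.1 =
            (y₁ : ZMod (2 ^ i)) ∧
          ZMod.castHom (pow_dvd_pow 2 (Nat.le_succ i)) (ZMod (2 ^ i)) z.2 =
            (y₂ : ZMod (2 ^ i)) ∧
          (a : ZMod (2 ^ (i + 1))) * z.1 ^ 2 + (b : ZMod (2 ^ (i + 1))) * z.1 * z.2 +
            (c : ZMod (2 ^ (i + 1))) * z.2 ^ 2 = (t : ZMod (2 ^ (i + 1)))} = 2 := by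
  rcases hodd with h1 | h2
  · exact aux_lift_s13 a b c t hb i hi y₁ y₂ h1 hrep
  · have hrep' : (c * y₂ ^ 2 + b * y₂ * y₁ + a * y₁ ^ 2) % (2 ^ i : ℤ) = t % (2 ^ i : ℤ) := by
      rw [← hrep]; ring_nf
    have := aux_lift_s13 c b a t hb i hi y₂ y₁ h2 hrep'
    refine Eq.trans (Nat.card_congr ?_) this
    refine Equiv.subtypeEquiv (Equiv.prodComm _ _) ?_
    rintro ⟨z₁, z₂⟩
    simp only [Equiv.prodComm_apply, Prod.swap_prod_mk]
    constructor
    · rintro ⟨u, v, w⟩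
      exact ⟨v, u, by linear_combination w⟩
    · rintro ⟨u, v, w⟩
      exact ⟨v, u, by linear_combination w⟩
end

section
/- Let p be an odd prime and a an integer not divisible by p. For s₁, s₂ ∈ {−1, 1}, the number of x ∈ Z/pZ with x ≢ 0, x + a ≢ 0 (mod p), (x/p) = s₁, and ((x+a)/p) = s₂ equals (1/4)·( p − (p mod 4) − ((a/p) + s₁)·((−a/p) + s₂) ). -/
/-!
For `x ∉ {0, -b}` the product `(1 + s₁ χ(x)) (1 + s₂ χ(x + b))` is `4` when `χ(x) = s₁` and
`χ(x + b) = s₂`, and `0` otherwise. Summed over all `x`, the linear terms are complete character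
sums and vanish, while `∑ χ(x) χ(x + b) = -1` (after `x = -b y` it is the Jacobi sum
`J(χ, χ) = -χ(-1)`), so the total is `q - s₁ s₂`. Removing the two terms `x = 0` and `x = -b`
and using `χ(b) χ(-b) = χ(-1) = χ₄(q)` gives the count.
-/

open Finset

namespace ZMod

theorem natCast_mod_four_add_χ₄_of_odd {n : ℕ} (hn : Odd n) : ((n % 4 : ℕ) : ℤ) + χ₄ n = 2 := by
  rcases Nat.odd_mod_four_iff.mp (Nat.odd_iff.mp hn) with h | h
  · rw [χ₄_nat_one_mod_four h, h]; norm_num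
  · rw [χ₄_nat_three_mod_four h, h]; norm_num

end ZMod

theorem Int.one_add_mul_eq_ite {u s : ℤ} (hu : u = 1 ∨ u = -1) (hs : s = 1 ∨ s = -1) :
    1 + s * u = if u = s then 2 else 0 := by
  rcases hu with rfl | rfl <;> rcases hs with rfl | rfl <;> norm_num

section quadraticChar

variable {F : Type*} [Field F] [Fintype F] [DecidableEq F]

local notation "χ" => quadraticChar F

theorem quadraticChar_sum_add_right (hF : ringChar F ≠ 2) (b : F) : ∑ x, χ (x + b) = 0 :=
  (Equiv.sum_comp (Equiv.addRight b) χ).trans (quadraticChar_sum_zero hF)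

theorem quadraticChar_sum_mul_one_sub (hF : ringChar F ≠ 2) :
    ∑ x, χ x * χ (1 - x) = -χ (-1) := by
  have h := jacobiSum_nontrivial_inv (quadraticChar_ne_one hF)
  rwa [(quadraticChar_isQuadratic F).inv] at h

theorem quadraticChar_sum_mul_add (hF : ringChar F ≠ 2) {b : F} (hb : b ≠ 0) :
    ∑ x, χ x * χ (x + b) = -1 := by
  have hsub (y : F) : χ (-b * y) * χ (-b * y + b) = χ (-1) * (χ y * χ (1 - y)) := by
    have : -b * y * (-b * y + b) = b ^ 2 * (-1 * (y * (1 - y))) := by ring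
    rw [← map_mul, this, map_mul, quadraticChar_sq_one' hb, one_mul, map_mul, map_mul]
  calc ∑ x, χ x * χ (x + b) = ∑ y, χ (-b * y) * χ (-b * y + b) :=
        (Equiv.sum_comp (Equiv.mulLeft₀ (-b) (neg_ne_zero.mpr hb)) (fun x ↦ χ x * χ (x + b))).symm
    _ = χ (-1) * -χ (-1) := by
        simp only [hsub, ← mul_sum, quadraticChar_sum_mul_one_sub hF]
    _ = -1 := by rw [mul_neg, ← map_mul, neg_mul_neg, mul_one, map_one]

theorem quadraticChar_one_add_mul_one_add_eq_ite {s₁ s₂ : ℤ} (hs₁ : s₁ = 1 ∨ s₁ = -1)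
    (hs₂ : s₂ = 1 ∨ s₂ = -1) {x y : F} (hx : x ≠ 0) (hy : y ≠ 0) :
    (1 + s₁ * χ x) * (1 + s₂ * χ y) = if χ x = s₁ ∧ χ y = s₂ then 4 else 0 := by
  rw [Int.one_add_mul_eq_ite (quadraticChar_dichotomy hx) hs₁,
    Int.one_add_mul_eq_ite (quadraticChar_dichotomy hy) hs₂]
  split_ifs <;> simp_all

theorem quadraticChar_sum_one_add_mul_one_add (hF : ringChar F ≠ 2) {b : F} (hb : b ≠ 0)
    (s₁ s₂ : ℤ) :
    ∑ x, (1 + s₁ * χ x) * (1 + s₂ * χ (x + b)) = Fintype.card F - s₁ * s₂ := by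
  have hexpand (x : F) : (1 + s₁ * χ x) * (1 + s₂ * χ (x + b)) =
      1 + s₁ * χ x + s₂ * χ (x + b) + s₁ * s₂ * (χ x * χ (x + b)) := by ring
  simp only [hexpand, sum_add_distrib, ← mul_sum, quadraticChar_sum_zero hF,
    quadraticChar_sum_add_right hF, quadraticChar_sum_mul_add hF hb, sum_const, card_univ]
  simp [sub_eq_add_neg]

theorem quadraticChar_mul_quadraticChar_neg (hF : ringChar F ≠ 2) {b : F} (hb : b ≠ 0) :
    χ b * χ (-b) = ZMod.χ₄ (Fintype.card F) := by
  rw [← quadraticChar_neg_one hF, ← map_mul, show b * -b = b ^ 2 * -1 by ring, map_mul,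
    quadraticChar_sq_one' hb, one_mul]

theorem quadraticChar_card_pair_mul_four (hF : ringChar F ≠ 2) {b : F} (hb : b ≠ 0)
    {s₁ s₂ : ℤ} (hs₁ : s₁ = 1 ∨ s₁ = -1) (hs₂ : s₂ = 1 ∨ s₂ = -1) :
    (#{x | x ≠ 0 ∧ x + b ≠ 0 ∧ χ x = s₁ ∧ χ (x + b) = s₂} : ℤ) * 4 =
      Fintype.card F - (Fintype.card F % 4 : ℕ) - (χ b + s₁) * (χ (-b) + s₂) := by
  set f : F → ℤ := fun x ↦ (1 + s₁ * χ x) * (1 + s₂ * χ (x + b))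
  have hne : (0 : F) ≠ -b := (neg_ne_zero.mpr hb).symm
  have hsplit : ∑ x, f x = ∑ x ∈ univ \ {0, -b}, f x + (f 0 + f (-b)) := by
    rw [← sum_pair hne, sum_sdiff (subset_univ _)]
  have hcount : ∑ x ∈ univ \ {0, -b}, f x =
      #{x | x ≠ 0 ∧ x + b ≠ 0 ∧ χ x = s₁ ∧ χ (x + b) = s₂} * 4 := by
    have hf : ∀ x ∈ univ \ {0, -b}, f x = if χ x = s₁ ∧ χ (x + b) = s₂ then 4 else 0 := by
      intro x hx
      simp only [mem_sdiff, mem_univ, mem_insert, mem_singleton, true_and, not_or] at hx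
      exact quadraticChar_one_add_mul_one_add_eq_ite hs₁ hs₂ hx.1
        (fun h ↦ hx.2 (eq_neg_of_add_eq_zero_left h))
    rw [sum_congr rfl hf, ← sum_filter, sum_const, nsmul_eq_mul]
    congr 3
    ext x
    simp only [mem_filter, mem_sdiff, mem_univ, mem_insert, mem_singleton, true_and, not_or,
      ne_eq, add_eq_zero_iff_eq_neg, and_assoc]
  have hmod := ZMod.natCast_mod_four_add_χ₄_of_odd
    (Nat.odd_iff.mpr (FiniteField.odd_card_of_char_ne_two hF))
  rw [← quadraticChar_mul_quadraticChar_neg hF hb] at hmod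
  rw [quadraticChar_sum_one_add_mul_one_add hF hb, hcount] at hsplit
  simp only [f, zero_add, neg_add_cancel, quadraticChar_zero, mul_zero, add_zero, mul_one,
    one_mul] at hsplit
  linear_combination hmod - hsplit

end quadraticChar

/-- count of x mod p with prescribed Legendre symbols for x and
x + a (Perron's formula). -/
theorem legendre_pair_count (p : ℕ) [Fact p.Prime] (hodd : Odd p) (a : ℤ)
    (ha : ¬ (p : ℤ) ∣ a) (s₁ s₂ : ℤ) (hs₁ : s₁ = 1 ∨ s₁ = -1)
    (hs₂ : s₂ = 1 ∨ s₂ = -1) :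
    (Nat.card {x : ZMod p // x ≠ 0 ∧ x + (a : ZMod p) ≠ 0 ∧
        legendreSym p (x.val : ℤ) = s₁ ∧
        legendreSym p ((x + (a : ZMod p)).val : ℤ) = s₂} : ℤ) * 4 =
      (p : ℤ) - ((p % 4 : ℕ) : ℤ) -
        (legendreSym p a + s₁) * (legendreSym p (-a) + s₂) := by
  have hF : ringChar (ZMod p) ≠ 2 := by
    rw [ZMod.ringChar_zmod_n]
    rintro rfl
    exact absurd hodd (by decide)
  have hb : (a : ZMod p) ≠ 0 := by rwa [Ne, ZMod.intCast_zmod_eq_zero_iff_dvd]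
  have h := quadraticChar_card_pair_mul_four hF hb hs₁ hs₂
  rw [ZMod.card] at h
  rw [Nat.card_eq_fintype_card, Fintype.card_subtype]
  simpa only [legendreSym, Int.cast_natCast, ZMod.natCast_zmod_val, Int.cast_neg] using h
end

section
/- Let k ≥ 1 and a an integer with 0 < a < 2^k. Then the number of elements x ∈ Z/2^kZ with ord_2(x) = ord_2(a) and cop_2(x) ≡ cop_2(a) (mod 8) equals max(2^{k−ord_2(a)−3}, 1). -/
/-!
Write `a = 2^v u` with `u` odd. The elements counted are exactly the residues `2^v m` with
`m < 2^(k-v)` and `m ≡ u (mod 8)`; such `m` form one residue class, which has `2^(k-v-3)`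
members below `2^(k-v)` when `8 ∣ 2^(k-v)`, and exactly one, `u` itself, otherwise.
-/

open Finset

open scoped Count in
theorem ZMod.card_subtype_val_eq_count {n : ℕ} [NeZero n] (P : ℕ → Prop) [DecidablePred P] :
    Nat.card {x : ZMod n // P x.val} = n.count P := by
  rw [Nat.count_eq_card_fintype, ← Nat.card_eq_fintype_card]
  exact Nat.card_congr
    { toFun := fun x => ⟨x.1.val, x.1.val_lt, x.2⟩
      invFun := fun m => ⟨m.1, by rw [ZMod.val_natCast_of_lt m.2.1]; exact m.2.2⟩
      left_inv := fun x => Subtype.ext (ZMod.natCast_zmod_val x.1)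
      right_inv := fun m => Subtype.ext (ZMod.val_natCast_of_lt m.2.1) }

theorem padicValNat_eq_and_div_modEq_iff {p r u n v : ℕ} [Fact p.Prime] (hpr : p ∣ r)
    (hpu : ¬ p ∣ u) :
    (padicValNat p n = v ∧ n / p ^ padicValNat p n ≡ u [MOD r]) ↔
      ∃ m, m ≡ u [MOD r] ∧ p ^ v * m = n := by
  constructor
  · rintro ⟨rfl, hmod⟩
    exact ⟨_, hmod, Nat.mul_div_cancel' pow_padicValNat_dvd⟩
  · rintro ⟨m, hmod, rfl⟩
    have hpm : ¬ p ∣ m := fun h => hpu ((Nat.ModEq.dvd_iff (hmod.of_dvd hpr) dvd_rfl).mp h)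
    have hm : m ≠ 0 := by rintro rfl; exact hpm (dvd_zero p)
    have hval : padicValNat p (p ^ v * m) = v := by
      rw [padicValNat.mul (pow_ne_zero v (Fact.out : p.Prime).ne_zero) hm,
        padicValNat.prime_pow, padicValNat.eq_zero_of_not_dvd hpm, add_zero]
    refine ⟨hval, ?_⟩
    rwa [hval, Nat.mul_div_cancel_left m (pow_pos (Fact.out : p.Prime).pos v)]

theorem count_padicValNat_eq_and_div_modEq {p r u : ℕ} [Fact p.Prime] (hpr : p ∣ r)
    (hpu : ¬ p ∣ u) (v N : ℕ) :
    (p ^ v * N).count (fun n => padicValNat p n = v ∧ n / p ^ padicValNat p n ≡ u [MOD r]) =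
      N.count (· ≡ u [MOD r]) := by
  have hpv : 0 < p ^ v := pow_pos (Fact.out : p.Prime).pos v
  rw [Nat.count_eq_card_filter_range, Nat.count_eq_card_filter_range,
    ← card_map ⟨(p ^ v * ·), mul_right_injective₀ hpv.ne'⟩ (s := {m ∈ range N | m ≡ u [MOD r]})]
  congr 1
  ext n
  simp only [mem_filter, mem_range, mem_map, Function.Embedding.coeFn_mk,
    padicValNat_eq_and_div_modEq_iff hpr hpu]
  constructor
  · rintro ⟨hn, m, hmod, rfl⟩
    exact ⟨m, ⟨lt_of_mul_lt_mul_left hn hpv.le, hmod⟩, rfl⟩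
  · rintro ⟨m, ⟨hm, hmod⟩, rfl⟩
    exact ⟨Nat.mul_lt_mul_of_pos_left hm hpv, m, hmod, rfl⟩

theorem count_modEq_two_pow_two_pow {u e j : ℕ} (hu : u < 2 ^ j) :
    (2 ^ j).count (· ≡ u [MOD 2 ^ e]) = max (2 ^ (j - e)) 1 := by
  rw [Nat.count_modEq_card _ (Nat.two_pow_pos e)]
  rcases lt_or_ge j e with hje | hej
  · have hlt : 2 ^ j < 2 ^ e := Nat.pow_lt_pow_right (by norm_num) hje
    rw [Nat.div_eq_of_lt hlt, Nat.mod_eq_of_lt hlt, Nat.mod_eq_of_lt (hu.trans hlt), if_pos hu,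
      Nat.sub_eq_zero_of_le hje.le]
    rfl
  · obtain ⟨i, rfl⟩ := Nat.exists_eq_add_of_le hej
    rw [pow_add, Nat.mul_div_cancel_left _ (Nat.two_pow_pos e), Nat.mul_mod_right,
      Nat.add_sub_cancel_left, max_eq_left Nat.one_le_two_pow, if_neg (Nat.not_lt_zero _),
      add_zero]

theorem symbol_class_size_two_general (k : ℕ) (a : ℕ) (ha : 0 < a)
    (hak : a < 2 ^ k) :
    Nat.card {x : ZMod (2 ^ k) //
        padicValNat 2 x.val = padicValNat 2 a ∧
        (x.val / 2 ^ padicValNat 2 x.val) % 8 = (a / 2 ^ padicValNat 2 a) % 8} =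
      max (2 ^ (k - padicValNat 2 a - 3)) 1 := by
  set v := padicValNat 2 a
  set u := a / 2 ^ v
  have hu : ¬ 2 ∣ u := by
    simpa only [Nat.factorization_def a Nat.prime_two] using
      Nat.not_dvd_ordCompl Nat.prime_two ha.ne'
  have ha_eq : 2 ^ v * u = a := Nat.mul_div_cancel' pow_padicValNat_dvd
  have hvk : v ≤ k := ((Nat.pow_lt_pow_iff_right one_lt_two).mp
    ((Nat.le_of_dvd ha pow_padicValNat_dvd).trans_lt hak)).le
  have hk : 2 ^ k = 2 ^ v * 2 ^ (k - v) := by rw [← pow_add, Nat.add_sub_cancel' hvk]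
  have hu_lt : u < 2 ^ (k - v) := lt_of_mul_lt_mul_left (ha_eq ▸ hk ▸ hak) (Nat.zero_le _)
  refine (ZMod.card_subtype_val_eq_count (n := 2 ^ k)
    (fun n => padicValNat 2 n = v ∧ n / 2 ^ padicValNat 2 n ≡ u [MOD 2 ^ 3])).trans ?_
  rw [hk, count_padicValNat_eq_and_div_modEq (dvd_pow_self 2 three_ne_zero) hu,
    count_modEq_two_pow_two_pow hu_lt]

/-- the number of x ∈ ZMod 2^k with the same 2-order as a and
odd part congruent to that of a mod 8 is max(2^(k−ord_2(a)−3), 1). -/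
theorem symbol_class_size_two (k : ℕ) (hk : 0 < k) (a : ℕ) (ha : 0 < a)
    (hak : a < 2 ^ k) :
    Nat.card {x : ZMod (2 ^ k) //
        padicValNat 2 x.val = padicValNat 2 a ∧
        (x.val / 2 ^ padicValNat 2 x.val) % 8 = (a / 2 ^ padicValNat 2 a) % 8} =
      max (2 ^ (k - padicValNat 2 a - 3)) 1 :=
  symbol_class_size_two_general k a ha hak
end
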